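/- arXiv:2005.10122 — 4 statements merged into one kernel-verified Lean document; each statement's English description precedes it below -/
import Mathlib

section
/- Let q ∈ ℂ with 0 < |q| < 1 and c ∈ ℂ ∖ {0}. Set φ(x) := θ_q(x/c) and ψ(x) := x φ′(x). If f, g are holomorphic on ℂ ∖ {0} and satisfy f(qx) = (c/x) f(x) and g(qx) = (c/x)(g(x) − f(x)) for all x ≠ 0, then there exist α, β ∈ ℂ such that f = α φ and g = α ψ + β φ. -/
/-!
For `h` holomorphic on `ℂ*` write `⟨h⟩ₘ = ∮_{|z|=1} z ^ m h(z) dz`. If `h(qx) = (c/x) h(x)`,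
rescaling the circle by `q` gives `⟨h⟩ₘ = q ^ (m+1) c ⟨h⟩ₘ₋₁`, so all moments vanish once
`⟨h⟩₋₁` does, and then `h = 0`: on each circle `|z| = ρ` the moments are, up to nonzero factors,
the Fourier coefficients of `θ ↦ h(ρ e^{iθ})`. Since `⟨φ⟩₋₁ = 2πi` (the constant term of `θ_q`),
every solution is a multiple of `φ`. Differentiating the functional equation of `φ` gives
`ψ(qx) = (c/x)(ψ(x) - φ(x))`, so `g - αψ` satisfies the same equation as `f`.
-/

/-- Jacobi theta function `θ_q(x) = ∑_{n ∈ ℤ} q^(n(n-1)/2) x^n`. -/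
noncomputable def theta (q : ℂ) (x : ℂ) : ℂ := ∑' n : ℤ, q ^ (n * (n - 1) / 2) * x ^ n

open Complex Metric Set Filter Real

lemma circleIntegral_comp_mul_left (q : ℂ) (f : ℂ → ℂ) (r : ℝ) :
    (∮ z in C(0, ‖q‖ * r), f z) = q * ∮ z in C(0, r), f (q * z) := by
  have hrot : ∀ θ : ℝ, circleMap 0 (‖q‖ * r) (θ + q.arg) = q * circleMap 0 r θ := by
    intro θ
    simp only [circleMap_zero]
    conv_rhs => rw [← norm_mul_exp_arg_mul_I q]
    rw [ofReal_mul, ofReal_add, add_mul, Complex.exp_add]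
    ring
  set G : ℝ → ℂ := fun θ => deriv (circleMap 0 (‖q‖ * r)) θ • f (circleMap 0 (‖q‖ * r) θ)
  have hG : Function.Periodic G (2 * π) := fun θ => by
    simp only [G, deriv_circleMap, periodic_circleMap 0 (‖q‖ * r) θ]
  calc (∮ z in C(0, ‖q‖ * r), f z) = ∫ θ in 0..2 * π, G (θ + q.arg) := by
        rw [intervalIntegral.integral_comp_add_right, zero_add, add_comm (2 * π),
          hG.intervalIntegral_add_eq q.arg 0, zero_add]
        rfl
    _ = q * ∮ z in C(0, r), f (q * z) := by
        rw [circleIntegral, ← intervalIntegral.integral_const_mul]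
        refine intervalIntegral.integral_congr fun θ _ => ?_
        simp only [G, deriv_circleMap, hrot θ, smul_eq_mul]
        ring

lemma hasSum_circleIntegral_of_norm_le {E ι : Type*} [NormedAddCommGroup E] [NormedSpace ℂ E]
    [CompleteSpace E] [Countable ι] {F : ι → ℂ → E} {u : ι → ℝ} {c : ℂ} {R : ℝ} (hR : 0 ≤ R)
    (hu : Summable u) (hF : ∀ i, ContinuousOn (F i) (sphere c R))
    (hFu : ∀ i, ∀ z ∈ sphere c R, ‖F i z‖ ≤ u i) :
    HasSum (fun i => ∮ z in C(c, R), F i z) (∮ z in C(c, R), ∑' i, F i z) :=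
  ((tendstoUniformlyOn_tsum hu hFu).tendsto_circleIntegral_of_continuousOn hR
    (Eventually.of_forall fun s => continuousOn_finsetSum s fun i _ => hF i)).congr fun _ =>
    circleIntegral.integral_fun_sum fun i _ => (hF i).circleIntegrable hR

lemma circleIntegral_eq_of_differentiableOn_compl_zero {f : ℂ → ℂ}
    (hd : DifferentiableOn ℂ f {0}ᶜ) {r R : ℝ} (hr : 0 < r) (hR : 0 < R) :
    (∮ z in C(0, R), f z) = ∮ z in C(0, r), f z := by
  wlog hle : r ≤ R generalizing r R
  · exact (this hR hr (le_of_not_ge hle)).symm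
  have hsub : closedBall (0 : ℂ) R \ ball 0 r ⊆ {0}ᶜ := fun z hz hz0 =>
    hz.2 (by rw [mem_singleton_iff.mp hz0]; exact mem_ball_self hr)
  refine circleIntegral_eq_of_differentiable_on_annulus_off_countable hr hle countable_empty
    (hd.continuousOn.mono hsub) fun z hz => hd.differentiableAt (isOpen_compl_singleton.mem_nhds ?_)
  rintro rfl
  exact hz.1.2 (mem_closedBall_self hr.le)

lemma circleMap_mul_zpow_sub_one {ρ : ℝ} (hρ : ρ ≠ 0) (n : ℤ) (θ : ℝ) :
    circleMap 0 ρ θ * I * circleMap 0 ρ θ ^ (-n - 1) =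
      I * ρ ^ (-n) * fourier (T := 2 * π) (-n) θ := by
  have hz : circleMap 0 ρ θ ≠ 0 := circleMap_ne_center hρ
  have harg : 2 * π * I * ((-n : ℤ) : ℂ) * θ / ((2 * π : ℝ) : ℂ) = (-n : ℤ) * (θ * I) := by
    push_cast; field_simp
  rw [fourier_coe_apply, harg, exp_int_mul, mul_right_comm, ← zpow_one_add₀ hz, add_sub_cancel,
    circleMap_zero, mul_zpow]
  ring

lemma circleIntegral_zpow_mul_eq_intervalIntegral_fourier {ρ : ℝ} (hρ : ρ ≠ 0) (f : ℂ → ℂ)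
    (n : ℤ) : (∮ z in C(0, ρ), z ^ (-n - 1) * f z) =
      I * ρ ^ (-n) * ∫ θ in 0..2 * π, fourier (T := 2 * π) (-n) θ * f (circleMap 0 ρ θ) := by
  rw [circleIntegral, ← intervalIntegral.integral_const_mul]
  refine intervalIntegral.integral_congr fun θ _ => ?_
  rw [deriv_circleMap, smul_eq_mul, ← mul_assoc, circleMap_mul_zpow_sub_one hρ, mul_assoc]

lemma eqOn_zero_of_circleIntegral_zpow_mul_eq_zero {f : ℂ → ℂ} {ρ : ℝ} (hρ : 0 < ρ)
    (hc : ContinuousOn f (sphere 0 ρ)) (h0 : ∀ m : ℤ, (∮ z in C(0, ρ), z ^ m * f z) = 0) :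
    EqOn f 0 (sphere 0 ρ) := by
  have : Fact (0 < 2 * π) := ⟨two_pi_pos⟩
  set g : ℝ → ℂ := fun θ => f (circleMap 0 ρ θ)
  have hg : Continuous g :=
    hc.comp_continuous (continuous_circleMap 0 ρ) (circleMap_mem_sphere 0 hρ.le)
  have hper : g 0 = g (0 + 2 * π) := congrArg f (periodic_circleMap 0 ρ 0).symm
  let F : C(AddCircle (2 * π), ℂ) := ⟨_, AddCircle.liftIoc_continuous hper hg.continuousOn⟩
  have hF : ∀ θ ∈ Ioc 0 (2 * π), F θ = g θ := fun θ hθ =>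
    AddCircle.liftIoc_coe_apply (p := 2 * π) (a := 0) (f := g) (by rwa [zero_add])
  have hcoeff : ∀ n, fourierCoeff F n = 0 := by
    intro n
    rw [fourierCoeff_eq_intervalIntegral _ _ 0, zero_add]
    have h1 := h0 (-n - 1)
    rw [circleIntegral_zpow_mul_eq_intervalIntegral_fourier hρ.ne' f n] at h1
    rw [intervalIntegral.integral_congr_ae (g := fun θ => fourier (T := 2 * π) (-n) θ * g θ),
      (mul_eq_zero.mp h1).resolve_left
        (mul_ne_zero I_ne_zero (zpow_ne_zero _ (ofReal_ne_zero.mpr hρ.ne'))), smul_zero]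
    refine Eventually.of_forall fun θ hθ => ?_
    rw [uIoc_of_le two_pi_pos.le] at hθ
    rw [smul_eq_mul, hF θ hθ]
  intro x hx
  rw [← abs_of_pos hρ, ← image_circleMap_Ioc] at hx
  obtain ⟨θ, hθ, rfl⟩ := hx
  have := has_pointwise_sum_fourier_series_of_summable (f := F)
    (by rw [show fourierCoeff F = 0 from funext hcoeff]; exact summable_zero) θ
  simp only [hcoeff, zero_smul, hF θ hθ] at this
  exact this.unique hasSum_zero

/-- `laurentMoment f m` is `2πi` times the Laurent coefficient of `f` of index `-m - 1`. -/
noncomputable def laurentMoment (f : ℂ → ℂ) (m : ℤ) : ℂ := ∮ z in C(0, 1), z ^ m * f z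

section LaurentMoment

variable {f : ℂ → ℂ}

lemma DifferentiableOn.zpow_mul (hd : DifferentiableOn ℂ f {0}ᶜ) (m : ℤ) :
    DifferentiableOn ℂ (fun z => z ^ m * f z) {0}ᶜ := fun z hz =>
  ((differentiableAt_zpow.mpr (Or.inl hz)).differentiableWithinAt).mul (hd z hz)

lemma circleIntegral_zpow_mul_eq_laurentMoment (hd : DifferentiableOn ℂ f {0}ᶜ) (m : ℤ) {r : ℝ}
    (hr : 0 < r) : (∮ z in C(0, r), z ^ m * f z) = laurentMoment f m :=
  circleIntegral_eq_of_differentiableOn_compl_zero (hd.zpow_mul m) one_pos hr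

lemma laurentMoment_sub_const_mul {g : ℂ → ℂ} (hf : DifferentiableOn ℂ f {0}ᶜ)
    (hg : DifferentiableOn ℂ g {0}ᶜ) (α : ℂ) (m : ℤ) :
    laurentMoment (fun x => f x - α * g x) m = laurentMoment f m - α * laurentMoment g m := by
  have hint : ∀ {k : ℂ → ℂ}, DifferentiableOn ℂ k {0}ᶜ →
      CircleIntegrable (fun z => z ^ m * k z) 0 1 := fun hk =>
    ((hk.zpow_mul m).continuousOn.mono fun _ hz => ne_zero_of_mem_sphere one_ne_zero ⟨_, hz⟩
      ).circleIntegrable zero_le_one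
  simp only [laurentMoment, mul_sub]
  rw [circleIntegral.integral_sub (hint hf) (hint (hg.const_mul α)),
    ← circleIntegral.integral_const_mul]
  simp only [mul_left_comm]

lemma laurentMoment_comp_const_mul {c : ℂ} (hc : c ≠ 0) (hd : DifferentiableOn ℂ f {0}ᶜ)
    (m : ℤ) : c ^ (m + 1) * laurentMoment (fun x => f (c * x)) m = laurentMoment f m := by
  rw [← circleIntegral_zpow_mul_eq_laurentMoment hd m (r := ‖c‖ * 1) (by simpa using hc),
    circleIntegral_comp_mul_left, laurentMoment, ← circleIntegral.integral_const_mul,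
    ← circleIntegral.integral_const_mul]
  refine circleIntegral.integral_congr zero_le_one fun z _ => ?_
  rw [mul_zpow, zpow_add_one₀ hc]
  ring

lemma laurentMoment_eq_of_mul_eq {q c : ℂ} (hq : q ≠ 0) (hd : DifferentiableOn ℂ f {0}ᶜ)
    (he : ∀ x ≠ 0, f (q * x) = c / x * f x) (m : ℤ) :
    laurentMoment f m = q ^ (m + 1) * c * laurentMoment f (m - 1) := by
  rw [← laurentMoment_comp_const_mul hq hd, mul_assoc, laurentMoment, laurentMoment]
  congr 1
  rw [← circleIntegral.integral_const_mul]
  refine circleIntegral.integral_congr zero_le_one fun z hz => ?_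
  have hz0 : z ≠ 0 := ne_zero_of_mem_sphere one_ne_zero ⟨z, hz⟩
  rw [he z hz0, zpow_sub_one₀ hz0]
  field_simp

lemma laurentMoment_eq_zero_of_mul_eq {q c : ℂ} (hq : q ≠ 0) (hc : c ≠ 0)
    (hd : DifferentiableOn ℂ f {0}ᶜ) (he : ∀ x ≠ 0, f (q * x) = c / x * f x)
    (h0 : laurentMoment f (-1) = 0) (m : ℤ) : laurentMoment f m = 0 := by
  have step : ∀ k, laurentMoment f k = 0 ↔ laurentMoment f (k - 1) = 0 := fun k => by
    rw [laurentMoment_eq_of_mul_eq hq hd he k, mul_eq_zero,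
      or_iff_right (mul_ne_zero (zpow_ne_zero _ hq) hc)]
  exact Int.inductionOn' m (-1) h0 (fun k _ ih => (step (k + 1)).mpr (by simpa using ih))
    fun k _ ih => (step k).mp ih

lemma eqOn_zero_of_laurentMoment_eq_zero (hd : DifferentiableOn ℂ f {0}ᶜ)
    (h0 : ∀ m, laurentMoment f m = 0) : EqOn f 0 {0}ᶜ := by
  intro x hx
  have hx' : 0 < ‖x‖ := norm_pos_iff.mpr hx
  refine eqOn_zero_of_circleIntegral_zpow_mul_eq_zero hx'
    (hd.continuousOn.mono fun z hz => ne_zero_of_mem_sphere hx'.ne' ⟨z, hz⟩)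
    (fun m => by rw [circleIntegral_zpow_mul_eq_laurentMoment hd m hx', h0])
    (mem_sphere_zero_iff_norm.mpr rfl)

theorem exists_eq_const_mul_of_mul_eq {q c : ℂ} (hq : q ≠ 0) (hc : c ≠ 0) {φ : ℂ → ℂ}
    (hφd : DifferentiableOn ℂ φ {0}ᶜ) (hφe : ∀ x ≠ 0, φ (q * x) = c / x * φ x)
    (hφ0 : laurentMoment φ (-1) ≠ 0) (hd : DifferentiableOn ℂ f {0}ᶜ)
    (he : ∀ x ≠ 0, f (q * x) = c / x * f x) : ∃ α : ℂ, ∀ x ≠ 0, f x = α * φ x := by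
  set α := laurentMoment f (-1) / laurentMoment φ (-1)
  have hkd : DifferentiableOn ℂ (fun x => f x - α * φ x) {0}ᶜ := hd.sub (hφd.const_mul α)
  have hke : ∀ x ≠ 0, f (q * x) - α * φ (q * x) = c / x * (f x - α * φ x) := fun x hx => by
    rw [he x hx, hφe x hx]; ring
  have hk0 : laurentMoment (fun x => f x - α * φ x) (-1) = 0 := by
    rw [laurentMoment_sub_const_mul hd hφd, div_mul_cancel₀ _ hφ0, sub_self]
  exact ⟨α, fun x hx => sub_eq_zero.mp <| eqOn_zero_of_laurentMoment_eq_zero hkd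
    (laurentMoment_eq_zero_of_mul_eq hq hc hkd hke hk0) hx⟩

end LaurentMoment

lemma zpow_le_zpow_add_zpow {r t R : ℝ} (hr : 0 < r) (hrt : r ≤ t) (htR : t ≤ R) (n : ℤ) :
    t ^ n ≤ r ^ n + R ^ n := by
  have ht : 0 < t := hr.trans_le hrt
  rcases le_total 0 n with hn | hn
  · exact (zpow_le_zpow_left₀ hn ht.le htR).trans (le_add_of_nonneg_left (zpow_pos hr n).le)
  · calc t ^ n = (t ^ (-n))⁻¹ := by rw [zpow_neg, inv_inv]
      _ ≤ (r ^ (-n))⁻¹ :=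
        inv_anti₀ (zpow_pos hr _) (zpow_le_zpow_left₀ (neg_nonneg.mpr hn) hr.le hrt)
      _ = r ^ n := by rw [zpow_neg, inv_inv]
      _ ≤ r ^ n + R ^ n := le_add_of_nonneg_right (zpow_pos (hr.trans_le (hrt.trans htR)) n).le

section LaurentSeries

variable {a : ℤ → ℂ}

lemma differentiableOn_tsum_mul_zpow (ha : ∀ ρ > 0, Summable fun n => ‖a n‖ * ρ ^ n) :
    DifferentiableOn ℂ (fun x => ∑' n, a n * x ^ n) {0}ᶜ := by
  intro x hx
  have hx' : 0 < ‖x‖ := norm_pos_iff.mpr hx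
  set U := {z : ℂ | ‖x‖ / 2 < ‖z‖} ∩ {z | ‖z‖ < 2 * ‖x‖}
  have hU : IsOpen U :=
    (isOpen_lt continuous_const continuous_norm).inter (isOpen_lt continuous_norm continuous_const)
  have hxU : x ∈ U := ⟨show ‖x‖ / 2 < ‖x‖ by linarith, show ‖x‖ < 2 * ‖x‖ by linarith⟩
  have hU0 : ∀ z ∈ U, z ≠ 0 := fun z hz => norm_pos_iff.mp ((half_pos hx').trans hz.1)
  have hbound : ∀ n, ∀ z ∈ U,
      ‖a n * z ^ n‖ ≤ ‖a n‖ * (‖x‖ / 2) ^ n + ‖a n‖ * (2 * ‖x‖) ^ n := fun n z hz => by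
    rw [norm_mul, norm_zpow, ← mul_add]
    exact mul_le_mul_of_nonneg_left
      (zpow_le_zpow_add_zpow (half_pos hx') hz.1.le hz.2.le n) (norm_nonneg _)
  have hdiff := differentiableOn_tsum_of_summable_norm
    ((ha _ (half_pos hx')).add (ha (2 * ‖x‖) (by positivity)))
    (fun n z hz => ((differentiableAt_zpow.mpr (Or.inl (hU0 z hz))).const_mul _
      ).differentiableWithinAt) hU hbound
  exact (hdiff.differentiableAt (hU.mem_nhds hxU)).differentiableWithinAt

lemma laurentMoment_tsum_mul_zpow (ha : Summable fun n => ‖a n‖) :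
    laurentMoment (fun x => ∑' n, a n * x ^ n) (-1) = 2 * π * I * a 0 := by
  have hsphere : ∀ z ∈ sphere (0 : ℂ) 1, z ≠ 0 := fun z hz =>
    ne_zero_of_mem_sphere one_ne_zero ⟨z, hz⟩
  have hsum := hasSum_circleIntegral_of_norm_le (F := fun n z => z ^ (-1 : ℤ) * (a n * z ^ n))
    zero_le_one ha (fun n => by fun_prop (disch := exact fun z hz => Or.inl (hsphere z hz)))
    fun n z hz => by
      rw [norm_mul, norm_mul, norm_zpow, norm_zpow, mem_sphere_zero_iff_norm.mp hz]
      simp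
  have hterm : ∀ n, (∮ z in C(0, 1), z ^ (-1 : ℤ) * (a n * z ^ n)) =
      a n * ∮ z in C(0, 1), (z - 0) ^ (n - 1) := by
    intro n
    rw [← circleIntegral.integral_const_mul]
    refine circleIntegral.integral_congr zero_le_one fun z hz => ?_
    rw [sub_zero, zpow_sub_one₀ (hsphere z hz), zpow_neg_one]
    ring
  have hne : ∀ n ≠ 0, (∮ z in C(0, 1), z ^ (-1 : ℤ) * (a n * z ^ n)) = 0 := fun n hn => by
    rw [hterm, circleIntegral.integral_sub_zpow_of_ne (by omega), mul_zero]
  simp_rw [laurentMoment, ← tsum_mul_left]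
  rw [(hasSum_single 0 hne).unique hsum |>.symm, hterm]
  simp_rw [zero_sub, zpow_neg_one]
  rw [circleIntegral.integral_sub_center_inv _ one_ne_zero]
  ring

end LaurentSeries

section Theta

lemma summable_pow_triangle_mul_zpow {r : ℝ} (hr0 : 0 < r) (hr1 : r < 1) {ρ : ℝ} (hρ : 0 < ρ) :
    Summable fun n : ℤ => r ^ (n * (n - 1) / 2) * ρ ^ n := by
  have hτ : 0 < (I * (-Real.log r / (2 * π) : ℝ)).im := by
    rw [I_mul_im, ofReal_re]
    exact div_pos (neg_pos.mpr (Real.log_neg hr0 hr1)) two_pi_pos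
  -- the summands are the norms of the terms of the Jacobi theta series `jacobiTheta₂ z τ`
  refine ((summable_jacobiTheta₂_term_iff
    (I * ((Real.log r / 2 - Real.log ρ) / (2 * π) : ℝ)) _).mpr hτ).norm.congr fun n => ?_
  have hdiv : ((n * (n - 1) / 2 : ℤ) : ℝ) = n * (n - 1) / 2 := by
    rw [Int.cast_div (Int.even_mul_pred_self n).two_dvd (by norm_num)]
    push_cast; ring
  rw [norm_jacobiTheta₂_term, ← Real.rpow_intCast, Real.rpow_def_of_pos hr0, ← Real.rpow_intCast,
    Real.rpow_def_of_pos hρ, ← Real.exp_add, hdiv, I_mul_im, ofReal_re, I_mul_im, ofReal_re]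
  congr 1
  field_simp
  ring

variable {q : ℂ}

lemma summable_norm_theta_coeff_mul_zpow (hq0 : 0 < ‖q‖) (hq1 : ‖q‖ < 1) {ρ : ℝ} (hρ : 0 < ρ) :
    Summable fun n : ℤ => ‖q ^ (n * (n - 1) / 2)‖ * ρ ^ n := by
  simpa only [norm_zpow] using summable_pow_triangle_mul_zpow hq0 hq1 hρ

lemma differentiableOn_theta (hq0 : 0 < ‖q‖) (hq1 : ‖q‖ < 1) :
    DifferentiableOn ℂ (theta q) {0}ᶜ :=
  differentiableOn_tsum_mul_zpow fun _ => summable_norm_theta_coeff_mul_zpow hq0 hq1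

lemma laurentMoment_theta (hq0 : 0 < ‖q‖) (hq1 : ‖q‖ < 1) :
    laurentMoment (theta q) (-1) = 2 * π * I := by
  rw [show theta q = fun x => ∑' n : ℤ, q ^ (n * (n - 1) / 2) * x ^ n from rfl,
    laurentMoment_tsum_mul_zpow ((summable_norm_theta_coeff_mul_zpow hq0 hq1 one_pos).congr
      fun n => by rw [one_zpow, mul_one])]
  simp

lemma theta_mul_left (hq : q ≠ 0) {y : ℂ} (hy : y ≠ 0) : theta q (q * y) = y⁻¹ * theta q y := by
  have hexp : ∀ n : ℤ, (n + 1) * (n + 1 - 1) / 2 = n * (n - 1) / 2 + n := fun n => by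
    rw [show (n + 1) * (n + 1 - 1) = n * (n - 1) + n * 2 by ring,
      Int.add_mul_ediv_right _ _ two_ne_zero]
  have hshift : theta q y = ∑' n : ℤ, q ^ ((n + 1) * (n + 1 - 1) / 2) * y ^ (n + 1) :=
    ((Equiv.addRight (1 : ℤ)).tsum_eq _).symm
  rw [hshift, theta, ← tsum_mul_left]
  refine tsum_congr fun n => ?_
  rw [hexp, zpow_add₀ hq, mul_zpow, zpow_add_one₀ hy]
  field_simp

variable {c : ℂ}

lemma differentiableOn_theta_div (hq0 : 0 < ‖q‖) (hq1 : ‖q‖ < 1) (hc : c ≠ 0) :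
    DifferentiableOn ℂ (fun y => theta q (y / c)) {0}ᶜ :=
  (differentiableOn_theta hq0 hq1).comp (differentiableOn_id.div_const c)
    fun _ hy => div_ne_zero hy hc

lemma theta_div_mul_left (hq : q ≠ 0) (hc : c ≠ 0) {x : ℂ} (hx : x ≠ 0) :
    theta q (q * x / c) = c / x * theta q (x / c) := by
  rw [mul_div_assoc, theta_mul_left hq (div_ne_zero hx hc), inv_div]

lemma laurentMoment_theta_div (hq0 : 0 < ‖q‖) (hq1 : ‖q‖ < 1) (hc : c ≠ 0) :
    laurentMoment (fun y => theta q (y / c)) (-1) = 2 * π * I := by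
  have := laurentMoment_comp_const_mul (inv_ne_zero hc) (differentiableOn_theta hq0 hq1) (-1)
  simpa only [neg_add_cancel, zpow_zero, one_mul, ← div_eq_inv_mul,
    laurentMoment_theta hq0 hq1] using this

end Theta

lemma mul_deriv_mul_eq_of_mul_eq {q c : ℂ} {φ : ℂ → ℂ} (hq : q ≠ 0)
    (hd : DifferentiableOn ℂ φ {0}ᶜ) (he : ∀ x ≠ 0, φ (q * x) = c / x * φ x) {x : ℂ} (hx : x ≠ 0) :
    q * x * deriv φ (q * x) = c / x * (x * deriv φ x - φ x) := by
  have hφ : ∀ {y : ℂ}, y ≠ 0 → HasDerivAt φ (deriv φ y) y := fun hy =>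
    (hd.differentiableAt (isOpen_compl_singleton.mem_nhds hy)).hasDerivAt
  have hL : HasDerivAt (fun y => φ (q * y)) (deriv φ (q * x) * (q * 1)) x :=
    (hφ (mul_ne_zero hq hx)).comp x ((hasDerivAt_id' x).const_mul q)
  have hR : HasDerivAt (fun y => c / y * φ y)
      ((0 * x - c * 1) / x ^ 2 * φ x + c / x * deriv φ x) x :=
    ((hasDerivAt_const x c).div (hasDerivAt_id' x) hx).mul (hφ hx)
  have hev : (fun y => φ (q * y)) =ᶠ[nhds x] fun y => c / y * φ y :=
    (eventually_ne_nhds hx).mono fun y hy => he y hy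
  calc q * x * deriv φ (q * x) = x * (deriv φ (q * x) * (q * 1)) := by ring
    _ = x * ((0 * x - c * 1) / x ^ 2 * φ x + c / x * deriv φ x) := by
      rw [hL.unique (hR.congr_of_eventuallyEq hev)]
    _ = c / x * (x * deriv φ x - φ x) := by field_simp; ring

/-- If `f(qx) = (c/x) f(x)` and `g(qx) = (c/x)(g(x) − f(x))` on `ℂ*`, then with
`φ(x) = θ_q(x/c)` and `ψ(x) = x φ'(x)` one has `f = α φ` and `g = α ψ + β φ`. -/
theorem stmt1 (q : ℂ) (hq0 : 0 < ‖q‖) (hq1 : ‖q‖ < 1)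
    (c : ℂ) (hc : c ≠ 0) (f g : ℂ → ℂ)
    (hf : ∀ x : ℂ, x ≠ 0 → DifferentiableAt ℂ f x)
    (hg : ∀ x : ℂ, x ≠ 0 → DifferentiableAt ℂ g x)
    (hfe : ∀ x : ℂ, x ≠ 0 → f (q * x) = c / x * f x)
    (hge : ∀ x : ℂ, x ≠ 0 → g (q * x) = c / x * (g x - f x)) :
    ∃ α β : ℂ,
      (∀ x : ℂ, x ≠ 0 → f x = α * theta q (x / c)) ∧
      (∀ x : ℂ, x ≠ 0 →
        g x = α * (x * deriv (fun y : ℂ => theta q (y / c)) x) + β * theta q (x / c)) := by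
  have hq : q ≠ 0 := norm_pos_iff.mp hq0
  set φ : ℂ → ℂ := fun y => theta q (y / c)
  have hφd : DifferentiableOn ℂ φ {0}ᶜ := differentiableOn_theta_div hq0 hq1 hc
  have hφe : ∀ x ≠ 0, φ (q * x) = c / x * φ x := fun x hx => theta_div_mul_left hq hc hx
  have hφ0 : laurentMoment φ (-1) ≠ 0 := laurentMoment_theta_div hq0 hq1 hc ▸ two_pi_I_ne_zero
  have hfd : DifferentiableOn ℂ f {0}ᶜ := fun x hx => (hf x hx).differentiableWithinAt
  have hgd : DifferentiableOn ℂ g {0}ᶜ := fun x hx => (hg x hx).differentiableWithinAt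
  obtain ⟨α, hα⟩ := exists_eq_const_mul_of_mul_eq hq hc hφd hφe hφ0 hfd hfe
  set ψ : ℂ → ℂ := fun y => y * deriv φ y
  have hψd : DifferentiableOn ℂ ψ {0}ᶜ :=
    differentiableOn_id.mul (hφd.deriv isOpen_compl_singleton)
  obtain ⟨β, hβ⟩ := exists_eq_const_mul_of_mul_eq (f := fun x => g x - α * ψ x) hq hc hφd hφe hφ0
    (hgd.sub (hψd.const_mul α)) fun x hx => by
      simp only [ψ, hge x hx, mul_deriv_mul_eq_of_mul_eq hq hφd hφe hx, hα x hx]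
      ring
  exact ⟨α, β, hα, fun x hx => by linear_combination hβ x hx⟩
end

section
/- Assuming (FR) and (NR), there always exists an indexing of the intermediate singularities for which the non-splitting condition holds: there exist indices 1 ≤ i < j ≤ 4 such that for all m, n ∈ {1, 2}, ρ_m/σ_n ≢ x_i x_j (mod q^ℤ). -/
/-!
Pass to the group `G = ℂˣ ⧸ q^ℤ`, writing `yₖ`, `rₘ`, `sₙ` for the classes of `xₖ`, `ρₘ`, `σₙ`.
Suppose every `yᵢ yⱼ` is one of the four classes `rₘ / sₙ`. The three products `y₀ y₁`, `y₀ y₂`,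
`y₀ y₃` are distinct, and the four classes fall into the pairs `{r₀/s₀, r₁/s₁}`, `{r₀/s₁, r₁/s₀}`,
each with product `r₀ r₁ / (s₀ s₁) = y₀ y₁ y₂ y₃` by (FR). So two of the three products, say
`y₀ yⱼ` and `y₀ yₖ`, form such a pair, and cancelling gives `y₀ = yₗ` for the remaining index `l`,
against (NR).
-/

/-- `a ≡ b (mod q^ℤ)`, i.e. `a/b ∈ q^ℤ`. -/
def qCong (q a b : ℂ) : Prop := ∃ m : ℤ, a = q ^ m * b

theorem eq_of_mul_mul_mul_eq {M : Type*} [CancelCommMonoid M] {a b c d : M}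
    (h : a * b * (a * c) = a * b * c * d) : a = d :=
  mul_left_cancel (a := a * b * c) (by rw [← h]; ac_rfl)

theorem exists_lt_mul_eq_of_injective {M : Type*} [CommMonoid M] {a b c d : M}
    (habcd : a * d = b * c) {u : Fin 3 → M}
    (hu : Function.Injective u) (hmem : ∀ k, u k = a ∨ u k = b ∨ u k = c ∨ u k = d) :
    ∃ k l, k < l ∧ u k * u l = a * d := by
  -- pigeonhole: two of the three values lie in the same pair `{a, d}` or `{b, c}`
  obtain ⟨k, l, hkl, hpair⟩ :=
    Fintype.exists_ne_map_eq_of_card_lt (fun k => u k = a ∨ u k = d) (by simp)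
  have hne := hu.ne hkl
  have hprod : u k * u l = a * d := by
    rcases hmem k with h | h | h | h <;> rcases hmem l with h' | h' | h' | h' <;> grind [mul_comm]
  rcases hkl.lt_or_gt with hlt | hlt
  · exact ⟨k, l, hlt, hprod⟩
  · exact ⟨l, k, hlt, by rwa [mul_comm]⟩

theorem exists_lt_forall_div_ne_mul {G : Type*} [CommGroup G] {y : Fin 4 → G}
    (hy : Function.Injective y) {r s : Fin 2 → G}
    (hprod : y 0 * y 1 * y 2 * y 3 = r 0 * r 1 / (s 0 * s 1)) :
    ∃ i j, i < j ∧ ∀ m n, r m / s n ≠ y i * y j := by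
  by_contra! h
  let u : Fin 3 → G := fun k => y 0 * y k.succ
  have hu : Function.Injective u := fun k l hkl => Fin.succ_injective _ (hy (mul_left_cancel hkl))
  have hmem : ∀ k, u k = r 0 / s 0 ∨ u k = r 0 / s 1 ∨ u k = r 1 / s 0 ∨ u k = r 1 / s 1 := by
    intro k
    obtain ⟨m, n, hmn⟩ := h 0 k.succ (Fin.succ_pos k)
    fin_cases m <;> fin_cases n <;> simp [u, ← hmn]
  have hcross : r 0 / s 0 * (r 1 / s 1) = r 0 / s 1 * (r 1 / s 0) := by
    rw [div_mul_div_comm, div_mul_div_comm, mul_comm (s 1)]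
  obtain ⟨k, l, hlt, hkl⟩ := exists_lt_mul_eq_of_injective hcross hu hmem
  rw [div_mul_div_comm, ← hprod] at hkl
  fin_cases k <;> fin_cases l <;> try exact absurd hlt (by decide)
  · exact hy.ne (by decide : (0 : Fin 4) ≠ 3) (eq_of_mul_mul_mul_eq hkl)
  · exact hy.ne (by decide : (0 : Fin 4) ≠ 2)
      (eq_of_mul_mul_mul_eq (hkl.trans (mul_right_comm _ _ _)))
  · exact hy.ne (by decide : (0 : Fin 4) ≠ 1) (eq_of_mul_mul_mul_eq (hkl.trans
      (show y 0 * y 1 * y 2 * y 3 = y 0 * y 2 * y 3 * y 1 by ac_rfl)))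

theorem qCong_coe_units_iff {q a b : ℂˣ} :
    qCong q a b ↔ (a : ℂˣ ⧸ Subgroup.zpowers q) = b := by
  rw [QuotientGroup.eq, Subgroup.mem_zpowers_iff, qCong, (Equiv.neg ℤ).exists_congr_left]
  refine exists_congr fun m => ?_
  rw [← Units.val_zpow_eq_zpow_val, ← Units.val_mul, Units.val_inj, Equiv.neg_symm,
    Equiv.neg_apply, zpow_neg, eq_inv_mul_iff_mul_eq, eq_inv_mul_iff_mul_eq, mul_comm]

theorem stmt9_general (q : ℂ) (hq0 : 0 < ‖q‖)
    (ρ σv : Fin 2 → ℂ) (xs : Fin 4 → ℂ)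
    (hρ0 : ∀ i, ρ i ≠ 0) (hσ0 : ∀ i, σv i ≠ 0) (hx0 : ∀ k, xs k ≠ 0)
    (hFR : qCong q (xs 0 * xs 1 * xs 2 * xs 3) (ρ 0 * ρ 1 / (σv 0 * σv 1)))
    (hNRx : ∀ k l : Fin 4, k ≠ l → ¬ qCong q (xs k) (xs l)) :
    ∃ i j : Fin 4, i < j ∧ ∀ m n : Fin 2, ¬ qCong q (ρ m / σv n) (xs i * xs j) := by
  lift q to ℂˣ using (norm_pos_iff.mp hq0).isUnit
  lift ρ to Fin 2 → ℂˣ using fun i => (hρ0 i).isUnit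
  lift σv to Fin 2 → ℂˣ using fun i => (hσ0 i).isUnit
  lift xs to Fin 4 → ℂˣ using fun k => (hx0 k).isUnit
  simp only [← Units.val_mul, ← Units.val_div_eq_div_val, qCong_coe_units_iff,
    QuotientGroup.mk_mul, QuotientGroup.mk_div] at hFR hNRx ⊢
  exact exists_lt_forall_div_ne_mul (fun k l hkl => by_contra fun hne => hNRx k l hne hkl) hFR

/-- Under (FR) and (NR) there is an indexing of the intermediate singularities for which
the non-splitting condition (NS) holds. -/
theorem stmt9 (q : ℂ) (hq0 : 0 < ‖q‖) (hq1 : ‖q‖ < 1)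
    (ρ σv : Fin 2 → ℂ) (xs : Fin 4 → ℂ)
    (hρ0 : ∀ i, ρ i ≠ 0) (hσ0 : ∀ i, σv i ≠ 0) (hx0 : ∀ k, xs k ≠ 0)
    (hFR : qCong q (xs 0 * xs 1 * xs 2 * xs 3) (ρ 0 * ρ 1 / (σv 0 * σv 1)))
    (hNRρ : ¬ qCong q (ρ 0) (ρ 1)) (hNRσ : ¬ qCong q (σv 0) (σv 1))
    (hNRx : ∀ k l : Fin 4, k ≠ l → ¬ qCong q (xs k) (xs l)) :
    ∃ i j : Fin 4, i < j ∧ ∀ m n : Fin 2, ¬ qCong q (ρ m / σv n) (xs i * xs j) :=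
  stmt9_general q hq0 ρ σv xs hρ0 hσ0 hx0 hFR hNRx
end

section
/- Let M ∈ F. Then M(x₁) ≠ 0 and M(x₂) ≠ 0, so for i = 1, 2 one may choose a nonzero column (f_i, g_i) of the 2×2 matrix M(x_i). Moreover: (i) one cannot have f₁g₂ = 0 and f₂g₁ = 0 simultaneously; (ii) the ratio (f₁g₂ : f₂g₁) ∈ P¹(ℂ) does not depend on the choices: for any two choices of nonzero columns (f_i, g_i) and (f′_i, g′_i) of M(x_i) (i = 1, 2), one has f₁g₂·f′₂g′₁ = f′₁g′₂·f₂g₁; (iii) this ratio is invariant under the diagonal action: if Γ, Δ ∈ GL₂(ℂ) are invertible diagonal matrices, N := Γ M Δ^{−1}, and (p_i, q_i) is a nonzero column of N(x_i) for i = 1, 2, then f₁g₂·p₂q₁ = p₁q₂·f₂g₁. -/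
open Matrix

/-- Entrywise holomorphy on `ℂ ∖ {0}` of a matrix-valued function. -/
def MatHolo (M : ℂ → Matrix (Fin 2) (Fin 2) ℂ) : Prop :=
  ∀ i j : Fin 2, ∀ x : ℂ, x ≠ 0 → DifferentiableAt ℂ (fun y => M y i j) x

/-- The Jimbo–Sakai monodromy space `F`: `2×2` matrices `M` holomorphic on `ℂ*` with
`x² M(qx) S = R M(x)`, `det M ≢ 0`, and `det M(x_i) = 0` for `i = 1, 2, 3, 4`. -/
def FJS (q : ℂ) (ρ σv : Fin 2 → ℂ) (xs : Fin 4 → ℂ) :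
    Set (ℂ → Matrix (Fin 2) (Fin 2) ℂ) :=
  {M | MatHolo M ∧
    (∀ x : ℂ, x ≠ 0 →
      (x ^ 2) • (M (q * x) * Matrix.diagonal σv) = Matrix.diagonal ρ * M x) ∧
    (∃ x : ℂ, x ≠ 0 ∧ (M x).det ≠ 0) ∧
    ∀ k : Fin 4, (M (xs k)).det = 0}

/-- `(f, g)` is a nonzero column of the `2×2` matrix `A`. -/
def IsNzCol (A : Matrix (Fin 2) (Fin 2) ℂ) (f g : ℂ) : Prop :=
  ∃ j : Fin 2, f = A 0 j ∧ g = A 1 j ∧ ¬(f = 0 ∧ g = 0)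

/-!
Entries of `M ∈ F` solve `x² f(qx) = (ρᵢ/σⱼ) f(x)` on `ℂ*`. The key fact is rigidity: a solution
of `x² f(qx) = c f(x)` vanishing at two points `a ≢ b` with `ab ≢ c` vanishes identically.
Dividing `f` by the theta functions `θ_a(x) = (x/a;q)_∞ (qa/x;q)_∞` and `θ_b`, whose zeros are
simple and fill exactly `q^ℤ a` and `q^ℤ b`, leaves a function `h` holomorphic on `ℂ*` with
`h(qx) = c/(ab) h(x)`. A `q`-periodic holomorphic function on `ℂ*` is bounded by its values on an
annulus, hence constant; applied to `h(y) h(x²/y)` and to `x h'/h`, this shows that `h` is either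
zero or a multiple of a monomial `xⁿ`, and the latter forces `c/(ab) = qⁿ`.

If `M(x₁) = 0`, then `det M = θ_{x₁}² D` and rigidity applied to `D` at `x₂, x₃` (non-resonant by
(FR) since `x₄ ≢ x₁`) gives `det M ≡ 0`. If `f₁g₂ = f₂g₁ = 0`, then since `det M(xᵢ) = 0` a whole
row of `M` vanishes at `x₁` and `x₂`, and (NS) lets rigidity kill that row. Parts (ii) and (iii)
only use that the columns of a singular `2×2` matrix are proportional.
-/

open Filter Topology

noncomputable section

namespace QDifference

variable {q a b c l : ℂ} {k : ℕ} {f g : ℂ → ℂ}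

lemma pow_ne_one_of_norm_lt_one (hq1 : ‖q‖ < 1) (hk : k ≠ 0) : q ^ k ≠ 1 := by
  intro h
  have : ‖q‖ ^ k < 1 := pow_lt_one₀ (norm_nonneg q) hq1 hk
  rw [← norm_pow, h, norm_one] at this
  exact lt_irrefl _ this

/-- Euler's coefficients `(-1)ⁿ q^(n(n-1)/2) / ((1-q)⋯(1-qⁿ))` of `(z;q)_∞`, in recursive form. -/
def qPochhammerCoeff (q : ℂ) : ℕ → ℂ
  | 0 => 1
  | n + 1 => qPochhammerCoeff q n * (-(q ^ n) / (1 - q ^ (n + 1)))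

/-- `(z;q)_∞ = ∏ₙ (1 - qⁿ z)`, defined by its power series so that it is entire by construction. -/
def qPochhammer (q z : ℂ) : ℂ := ∑' n, qPochhammerCoeff q n * z ^ n

lemma qPochhammerCoeff_succ_mul (hq1 : ‖q‖ < 1) (n : ℕ) :
    qPochhammerCoeff q (n + 1) * (1 - q ^ (n + 1)) = -(qPochhammerCoeff q n * q ^ n) := by
  have : 1 - q ^ (n + 1) ≠ 0 :=
    sub_ne_zero.mpr (pow_ne_one_of_norm_lt_one hq1 n.succ_ne_zero).symm
  rw [qPochhammerCoeff]
  field_simp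

lemma norm_qPochhammerCoeff_succ_le (hq1 : ‖q‖ < 1) (n : ℕ) :
    ‖qPochhammerCoeff q (n + 1)‖ ≤ ‖q‖ ^ n / (1 - ‖q‖) * ‖qPochhammerCoeff q n‖ := by
  have hden : 1 - ‖q‖ ≤ ‖1 - q ^ (n + 1)‖ := calc
    1 - ‖q‖ ≤ 1 - ‖q‖ ^ (n + 1) := by
      gcongr; exact pow_le_of_le_one (norm_nonneg q) hq1.le n.succ_ne_zero
    _ = ‖(1 : ℂ)‖ - ‖q ^ (n + 1)‖ := by rw [norm_one, norm_pow]
    _ ≤ ‖1 - q ^ (n + 1)‖ := norm_sub_norm_le _ _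
  rw [qPochhammerCoeff, norm_mul, norm_div, norm_neg, norm_pow, mul_comm]
  gcongr

lemma summable_norm_qPochhammerCoeff_mul_pow (hq1 : ‖q‖ < 1) {R : ℝ} (hR : 0 ≤ R) :
    Summable fun n => ‖qPochhammerCoeff q n‖ * R ^ n := by
  have hlim : Tendsto (fun n : ℕ => ‖q‖ ^ n / (1 - ‖q‖) * R) atTop (𝓝 0) := by
    simpa using ((tendsto_pow_atTop_nhds_zero_of_lt_one (norm_nonneg q) hq1).div_const
      (1 - ‖q‖)).mul_const R
  refine summable_of_ratio_norm_eventually_le (r := 1 / 2) (by norm_num) ?_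
  filter_upwards [hlim.eventually_le_const (by norm_num : (0 : ℝ) < 1 / 2)] with n hn
  simp only [Real.norm_eq_abs, abs_of_nonneg (by positivity : 0 ≤ ‖qPochhammerCoeff q _‖ * R ^ _)]
  calc ‖qPochhammerCoeff q (n + 1)‖ * R ^ (n + 1)
      ≤ ‖q‖ ^ n / (1 - ‖q‖) * ‖qPochhammerCoeff q n‖ * R ^ (n + 1) := by
        gcongr; exact norm_qPochhammerCoeff_succ_le hq1 n
    _ = (‖q‖ ^ n / (1 - ‖q‖) * R) * (‖qPochhammerCoeff q n‖ * R ^ n) := by ring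
    _ ≤ 1 / 2 * (‖qPochhammerCoeff q n‖ * R ^ n) := by gcongr

lemma summable_qPochhammerCoeff_mul_pow (hq1 : ‖q‖ < 1) (z : ℂ) :
    Summable fun n => qPochhammerCoeff q n * z ^ n :=
  Summable.of_norm <| by
    simpa only [norm_mul, norm_pow] using summable_norm_qPochhammerCoeff_mul_pow hq1 (norm_nonneg z)

lemma differentiable_qPochhammer (hq1 : ‖q‖ < 1) : Differentiable ℂ (qPochhammer q) := by
  intro z
  have hz : Metric.ball (0 : ℂ) (‖z‖ + 1) ∈ 𝓝 z :=
    Metric.isOpen_ball.mem_nhds (by simp [dist_eq_norm])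
  refine (Complex.differentiableOn_tsum_of_summable_norm
    (summable_norm_qPochhammerCoeff_mul_pow hq1 (by positivity : 0 ≤ ‖z‖ + 1))
    (fun n => (by fun_prop : Differentiable ℂ fun w : ℂ =>
      qPochhammerCoeff q n * w ^ n).differentiableOn)
    Metric.isOpen_ball fun n w hw => ?_).differentiableAt hz
  rw [norm_mul, norm_pow]
  gcongr
  simpa [dist_eq_norm] using (Metric.mem_ball.mp hw).le

lemma qPochhammer_eq_one_sub_mul (hq1 : ‖q‖ < 1) (z : ℂ) :
    qPochhammer q z = (1 - z) * qPochhammer q (q * z) := by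
  have h1 := summable_qPochhammerCoeff_mul_pow hq1 z
  have h2 := summable_qPochhammerCoeff_mul_pow hq1 (q * z)
  set b : ℕ → ℂ := fun n => qPochhammerCoeff q n * z ^ n - qPochhammerCoeff q n * (q * z) ^ n
  have hb_succ (n : ℕ) : b (n + 1) = -(z * (qPochhammerCoeff q n * (q * z) ^ n)) := by
    calc b (n + 1) = qPochhammerCoeff q (n + 1) * (1 - q ^ (n + 1)) * z ^ (n + 1) := by
          simp only [b]; ring
      _ = _ := by rw [qPochhammerCoeff_succ_mul hq1]; ring
  have hb : qPochhammer q z - qPochhammer q (q * z) = -(z * qPochhammer q (q * z)) := by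
    rw [qPochhammer, qPochhammer, ← h1.tsum_sub h2, (h1.sub h2).tsum_eq_zero_add,
      tsum_congr hb_succ, tsum_neg, tsum_mul_left]
    simp [qPochhammerCoeff]
  linear_combination hb

lemma qPochhammer_eq_prod_mul (hq1 : ‖q‖ < 1) (N : ℕ) (z : ℂ) :
    qPochhammer q z = (∏ k ∈ Finset.range N, (1 - q ^ k * z)) * qPochhammer q (q ^ N * z) := by
  induction N with
  | zero => simp
  | succ n ih =>
    rw [ih, Finset.prod_range_succ, qPochhammer_eq_one_sub_mul hq1 (q ^ n * z), ← mul_assoc q,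
      ← pow_succ']
    ring

lemma qPochhammer_zero : qPochhammer q 0 = 1 := by
  rw [qPochhammer, tsum_eq_single 0 fun n hn => by simp [zero_pow hn]]
  simp [qPochhammerCoeff]

lemma qPochhammer_ne_zero (hq1 : ‖q‖ < 1) {z : ℂ} (h : ∀ k : ℕ, q ^ k * z ≠ 1) :
    qPochhammer q z ≠ 0 := by
  intro h0
  have hprod (N : ℕ) : ∏ k ∈ Finset.range N, (1 - q ^ k * z) ≠ 0 :=
    Finset.prod_ne_zero_iff.mpr fun k _ => sub_ne_zero.mpr (h k).symm
  have hzero (N : ℕ) : qPochhammer q (q ^ N * z) = 0 := by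
    have := qPochhammer_eq_prod_mul hq1 N z
    rw [h0] at this
    exact (mul_eq_zero.mp this.symm).resolve_left (hprod N)
  have hlim : Tendsto (fun N : ℕ => qPochhammer q (q ^ N * z)) atTop (𝓝 (qPochhammer q 0)) :=
    (differentiable_qPochhammer hq1).continuous.continuousAt.tendsto.comp <| by
      simpa using (tendsto_pow_atTop_nhds_zero_of_norm_lt_one hq1).mul_const z
  have : qPochhammer q 0 = 0 :=
    tendsto_nhds_unique hlim (by simp only [hzero]; exact tendsto_const_nhds)
  rw [qPochhammer_zero] at this
  exact one_ne_zero this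

lemma iff_of_qCong (hq : q ≠ 0) {p : ℂ → Prop} (hp : ∀ x, x ≠ 0 → (p (q * x) ↔ p x))
    {x y : ℂ} (hx : x ≠ 0) (hxy : qCong q y x) : p y ↔ p x := by
  obtain ⟨n, rfl⟩ := hxy
  induction n using Int.induction_on with
  | zero => simp
  | succ n ih =>
    rw [zpow_add_one₀ hq, mul_comm _ q, mul_assoc, hp _ (mul_ne_zero (zpow_ne_zero _ hq) hx), ih]
  | pred n ih =>
    have e : q ^ (-(n : ℤ)) * x = q * (q ^ (-(n : ℤ) - 1) * x) := by
      rw [← mul_assoc, ← zpow_one_add₀ hq]; ring_nf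
    rw [← ih, e, hp _ (mul_ne_zero (zpow_ne_zero _ hq) hx)]

def QDiffEq (q : ℂ) (k : ℕ) (c : ℂ) (f : ℂ → ℂ) : Prop :=
  ∀ x : ℂ, x ≠ 0 → x ^ k * f (q * x) = c * f x

lemma QDiffEq.apply_eq_zero_iff (hf : QDiffEq q k c f) (hc : c ≠ 0) {x : ℂ} (hx : x ≠ 0) :
    f (q * x) = 0 ↔ f x = 0 := by
  have h := hf x hx
  constructor <;> intro h0 <;> simp_all

lemma QDiffEq.apply_eq_zero_of_qCong (hf : QDiffEq q k c f) (hq : q ≠ 0) (hc : c ≠ 0) {x : ℂ}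
    (ha : a ≠ 0) (hfa : f a = 0) (hxa : qCong q x a) : f x = 0 :=
  (iff_of_qCong hq (p := fun y => f y = 0) (fun _ hy => hf.apply_eq_zero_iff hc hy) ha hxa).mpr hfa

lemma QDiffEq.deriv_eq_of_apply_eq_zero (hf : QDiffEq q k c f) {x : ℂ} (hx : x ≠ 0)
    (hd : DifferentiableAt ℂ f (q * x)) (h0 : f (q * x) = 0) :
    x ^ k * (q * deriv f (q * x)) = c * deriv f x := by
  have hev : (fun y => y ^ k * f (q * y)) =ᶠ[𝓝 x] fun y => c * f y := by
    filter_upwards [eventually_ne_nhds hx] with y hy using hf y hy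
  have hcomp : DifferentiableAt ℂ (fun y => f (q * y)) x :=
    hd.comp x (differentiableAt_id.const_mul q)
  have := hev.deriv_eq
  rw [deriv_const_mul_field, deriv_fun_mul (by fun_prop) hcomp, deriv_comp_mul_left, h0,
    smul_eq_mul] at this
  linear_combination this

def qTheta (q a x : ℂ) : ℂ := qPochhammer q (x / a) * qPochhammer q (q * a / x)

lemma differentiableAt_qTheta (hq1 : ‖q‖ < 1) {x : ℂ} (hx : x ≠ 0) :
    DifferentiableAt ℂ (qTheta q a) x :=
  ((differentiable_qPochhammer hq1).differentiableAt.comp x (differentiableAt_id.div_const a)).mul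
    ((differentiable_qPochhammer hq1).differentiableAt.comp x
      ((differentiableAt_const _).div differentiableAt_id hx))

lemma qDiffEq_qTheta (hq0 : 0 < ‖q‖) (hq1 : ‖q‖ < 1) (ha : a ≠ 0) :
    QDiffEq q 1 (-a) (qTheta q a) := by
  intro x hx
  have hq : q ≠ 0 := norm_pos_iff.mp hq0
  have e1 : q * x / a = q * (x / a) := by ring
  have e2 : q * a / (q * x) = a / x := by field_simp
  have h2 := qPochhammer_eq_one_sub_mul hq1 (a / x)
  rw [← mul_div_assoc] at h2
  rw [qTheta, qTheta, e1, e2, qPochhammer_eq_one_sub_mul hq1 (x / a), h2]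
  field_simp
  ring

lemma qTheta_self (hq1 : ‖q‖ < 1) (ha : a ≠ 0) : qTheta q a a = 0 := by
  rw [qTheta, div_self ha, qPochhammer_eq_one_sub_mul hq1 1]
  ring

lemma qPochhammer_q_ne_zero (hq1 : ‖q‖ < 1) : qPochhammer q q ≠ 0 :=
  qPochhammer_ne_zero hq1 fun k => by
    rw [← pow_succ]; exact pow_ne_one_of_norm_lt_one hq1 k.succ_ne_zero

lemma qTheta_eq_zero_iff (hq0 : 0 < ‖q‖) (hq1 : ‖q‖ < 1) (ha : a ≠ 0) {x : ℂ} (hx : x ≠ 0) :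
    qTheta q a x = 0 ↔ qCong q x a := by
  have hq : q ≠ 0 := norm_pos_iff.mp hq0
  refine ⟨fun h => ?_, fun h => (qDiffEq_qTheta hq0 hq1 ha).apply_eq_zero_of_qCong hq
    (neg_ne_zero.mpr ha) ha (qTheta_self hq1 ha) h⟩
  have hzero {z : ℂ} (hz : qPochhammer q z = 0) : ∃ k : ℕ, q ^ k * z = 1 := by
    by_contra! hk; exact qPochhammer_ne_zero hq1 hk hz
  rcases mul_eq_zero.mp h with h | h
  · obtain ⟨k, hk⟩ := hzero h
    refine ⟨-k, ?_⟩
    rw [_root_.zpow_neg, zpow_natCast]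
    field_simp at hk ⊢
    linear_combination hk
  · obtain ⟨k, hk⟩ := hzero h
    refine ⟨k + 1, ?_⟩
    rw [zpow_add_one₀ hq, zpow_natCast]
    field_simp at hk ⊢
    linear_combination -hk

lemma hasDerivAt_qPochhammer_one (hq1 : ‖q‖ < 1) :
    HasDerivAt (qPochhammer q) (-qPochhammer q q) 1 := by
  have h : HasDerivAt (fun z => (1 - z) * qPochhammer q (q * z))
      (-1 * qPochhammer q (q * 1) + (1 - 1) * (deriv (qPochhammer q) (q * 1) * (q * 1))) 1 :=
    ((hasDerivAt_id' 1).const_sub 1).mul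
      ((differentiable_qPochhammer hq1 (q * 1)).hasDerivAt.comp 1 ((hasDerivAt_id' 1).const_mul q))
  rw [← funext (qPochhammer_eq_one_sub_mul hq1)] at h
  simpa using h

lemma deriv_qTheta_self (hq1 : ‖q‖ < 1) (ha : a ≠ 0) :
    deriv (qTheta q a) a = -qPochhammer q q ^ 2 / a := by
  have hfirst := (hasDerivAt_qPochhammer_one hq1).comp_of_eq a ((hasDerivAt_id' a).div_const a)
    (div_self ha).symm
  have hsecond := ((differentiable_qPochhammer hq1).differentiableAt.comp a
    ((differentiableAt_const (q * a)).div differentiableAt_id ha)).hasDerivAt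
  have h : HasDerivAt (qTheta q a) _ a := hfirst.mul hsecond
  rw [h.deriv]
  simp only [Function.comp_def, mul_div_assoc, div_self ha, qPochhammer_eq_one_sub_mul hq1 1,
    sub_self, zero_mul, add_zero, mul_one]
  ring

lemma deriv_qTheta_ne_zero (hq0 : 0 < ‖q‖) (hq1 : ‖q‖ < 1) (ha : a ≠ 0) {x : ℂ} (hx : x ≠ 0)
    (h : qTheta q a x = 0) : deriv (qTheta q a) x ≠ 0 := by
  have hq : q ≠ 0 := norm_pos_iff.mp hq0
  have hθ := qDiffEq_qTheta hq0 hq1 ha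
  refine (iff_of_qCong hq (p := fun y => qTheta q a y = 0 → deriv (qTheta q a) y ≠ 0) ?_ ha
    ((qTheta_eq_zero_iff hq0 hq1 ha hx).mp h)).mpr (fun _ => ?_) h
  · intro y hy
    rw [hθ.apply_eq_zero_iff (neg_ne_zero.mpr ha) hy]
    refine imp_congr_right fun h0 => not_congr ?_
    have hd := hθ.deriv_eq_of_apply_eq_zero hy (differentiableAt_qTheta hq1 (mul_ne_zero hq hy))
      ((hθ.apply_eq_zero_iff (neg_ne_zero.mpr ha) hy).mpr h0)
    constructor <;> intro h' <;> simp_all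
  · rw [deriv_qTheta_self hq1 ha]
    exact div_ne_zero (neg_ne_zero.mpr (pow_ne_zero 2 (qPochhammer_q_ne_zero hq1))) ha

lemma eventually_ne_zero_of_deriv_ne_zero {P : ℂ → ℂ} {x₀ : ℂ} (hd : DifferentiableAt ℂ P x₀)
    (hP : P x₀ = 0 → deriv P x₀ ≠ 0) : ∀ᶠ x in 𝓝[≠] x₀, P x ≠ 0 := by
  by_cases h : P x₀ = 0
  · simpa [h] using hd.hasDerivAt.eventually_ne (c := 0) (hP h)
  · exact (hd.continuousAt.eventually_ne h).filter_mono nhdsWithin_le_nhds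

lemma eq_of_continuousAt_of_eventuallyEq {φ ψ : ℂ → ℂ} {x₀ : ℂ} (hφ : ContinuousAt φ x₀)
    (hψ : ContinuousAt ψ x₀) (h : ∀ᶠ x in 𝓝[≠] x₀, φ x = ψ x) : φ x₀ = ψ x₀ :=
  tendsto_nhds_unique (hφ.continuousWithinAt.tendsto.congr' h) hψ.continuousWithinAt.tendsto

lemma exists_eq_mul_of_deriv_ne_zero {f P : ℂ → ℂ} (hf : ∀ x, x ≠ 0 → DifferentiableAt ℂ f x)
    (hP : ∀ x, x ≠ 0 → DifferentiableAt ℂ P x)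
    (hzero : ∀ x, x ≠ 0 → P x = 0 → f x = 0 ∧ deriv P x ≠ 0) :
    ∃ g : ℂ → ℂ, (∀ x, x ≠ 0 → DifferentiableAt ℂ g x) ∧ ∀ x, x ≠ 0 → f x = g x * P x := by
  classical
  refine ⟨fun x => if P x = 0 then deriv f x / deriv P x else f x / P x, fun x₀ hx₀ => ?_,
    fun x hx => ?_⟩
  · by_cases hP0 : P x₀ = 0
    · -- near the zero `x₀`, the quotient agrees with `dslope f x₀ / dslope P x₀`
      have hs : ({0}ᶜ : Set ℂ) ∈ 𝓝 x₀ := isOpen_compl_singleton.mem_nhds hx₀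
      have hslope {F : ℂ → ℂ} (hF : ∀ x, x ≠ 0 → DifferentiableAt ℂ F x) :
          DifferentiableAt ℂ (dslope F x₀) x₀ :=
        ((Complex.differentiableOn_dslope hs).mpr
          fun x hx => (hF x hx).differentiableWithinAt).differentiableAt hs
      have hf0 := (hzero x₀ hx₀ hP0).1
      have hP' : dslope P x₀ x₀ ≠ 0 := by rw [dslope_same]; exact (hzero x₀ hx₀ hP0).2
      refine ((hslope hf).div (hslope hP) hP').congr_of_eventuallyEq ?_
      filter_upwards [eventually_nhdsWithin_iff.mp (eventually_ne_zero_of_deriv_ne_zero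
        (hP x₀ hx₀) fun _ => (hzero x₀ hx₀ hP0).2)] with x hx
      by_cases hxx : x = x₀
      · simp [hxx, hP0, dslope_same]
      · rw [if_neg (hx hxx), Pi.div_apply, dslope_of_ne _ hxx, dslope_of_ne _ hxx, slope_def_field,
          slope_def_field, hf0, hP0, sub_zero, sub_zero, div_div_div_cancel_right₀
          (sub_ne_zero.mpr hxx)]
    · refine ((hf x₀ hx₀).div (hP x₀ hx₀) hP0).congr_of_eventuallyEq ?_
      filter_upwards [(hP x₀ hx₀).continuousAt.eventually_ne hP0] with x hx
      rw [if_neg hx, Pi.div_apply]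
  · by_cases hP0 : P x = 0
    · rw [hP0, mul_zero, (hzero x hx hP0).1]
    · dsimp only
      rw [if_neg hP0, div_mul_cancel₀ _ hP0]

lemma QDiffEq.of_eq_mul (hq : q ≠ 0) {P : ℂ → ℂ} {d : ℂ} (hd : d ≠ 0)
    (hf : QDiffEq q (k + 1) c f) (hP : QDiffEq q 1 d P)
    (hg : ∀ x, x ≠ 0 → DifferentiableAt ℂ g x) (hPne : ∀ x, x ≠ 0 → ∀ᶠ y in 𝓝[≠] x, P y ≠ 0)
    (hfgP : ∀ x, x ≠ 0 → f x = g x * P x) : QDiffEq q k (c / d) g := by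
  intro x₀ hx₀
  refine eq_of_continuousAt_of_eventuallyEq (φ := fun x => x ^ k * g (q * x))
    (ψ := fun x => c / d * g x) ?_ (continuousAt_const.mul (hg x₀ hx₀).continuousAt) ?_
  · exact (continuousAt_id.pow k).mul
      ((hg _ (mul_ne_zero hq hx₀)).continuousAt.comp (continuousAt_const.mul continuousAt_id))
  filter_upwards [hPne x₀ hx₀, (eventually_ne_nhds hx₀).filter_mono nhdsWithin_le_nhds]
    with x hPx hx
  have h := hf x hx
  rw [hfgP x hx, hfgP _ (mul_ne_zero hq hx)] at h
  have hPq := hP x hx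
  field_simp
  apply mul_right_cancel₀ hPx
  linear_combination h - x ^ k * g (q * x) * hPq

lemma QDiffEq.exists_eq_mul_qTheta (hq0 : 0 < ‖q‖) (hq1 : ‖q‖ < 1)
    (hholo : ∀ x, x ≠ 0 → DifferentiableAt ℂ f x) (hf : QDiffEq q (k + 1) c f) (hc : c ≠ 0)
    (ha : a ≠ 0) (hfa : f a = 0) :
    ∃ g : ℂ → ℂ, (∀ x, x ≠ 0 → DifferentiableAt ℂ g x) ∧ (∀ x, x ≠ 0 → f x = g x * qTheta q a x) ∧
      QDiffEq q k (c / -a) g := by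
  have hq : q ≠ 0 := norm_pos_iff.mp hq0
  obtain ⟨g, hg, hfg⟩ := exists_eq_mul_of_deriv_ne_zero hholo
    (fun x hx => differentiableAt_qTheta hq1 hx) fun x hx h0 =>
      ⟨hf.apply_eq_zero_of_qCong hq hc ha hfa ((qTheta_eq_zero_iff hq0 hq1 ha hx).mp h0),
        deriv_qTheta_ne_zero hq0 hq1 ha hx h0⟩
  refine ⟨g, hg, hfg, hf.of_eq_mul hq (neg_ne_zero.mpr ha) (qDiffEq_qTheta hq0 hq1 ha) hg
    (fun x hx => ?_) hfg⟩
  exact eventually_ne_zero_of_deriv_ne_zero (differentiableAt_qTheta hq1 hx)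
    (deriv_qTheta_ne_zero hq0 hq1 ha hx)

lemma exists_zpow_mul_mem_annulus (hq0 : 0 < ‖q‖) (hq1 : ‖q‖ < 1) {x : ℂ} (hx : x ≠ 0) :
    ∃ n : ℤ, q ^ n * x ∈ Metric.closedBall (0 : ℂ) 1 \ Metric.ball 0 ‖q‖ := by
  obtain ⟨n, hlo, hhi⟩ := exists_mem_Ioc_zpow (norm_pos_iff.mpr hx) ((one_lt_inv₀ hq0).mpr hq1)
  have hcancel (m : ℤ) : ‖q‖ ^ m * ‖q‖⁻¹ ^ m = 1 := by
    rw [← mul_zpow, mul_inv_cancel₀ hq0.ne', _root_.one_zpow]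
  refine ⟨n + 1, ?_, ?_⟩ <;> simp only [mem_closedBall_zero_iff, Metric.mem_ball, dist_zero_right,
    not_lt, norm_mul, norm_zpow]
  · calc ‖q‖ ^ (n + 1) * ‖x‖ ≤ ‖q‖ ^ (n + 1) * ‖q‖⁻¹ ^ (n + 1) := by gcongr
      _ = 1 := hcancel _
  · calc ‖q‖ = ‖q‖ ^ (n + 1) * ‖q‖⁻¹ ^ n := by
          rw [zpow_add_one₀ hq0.ne', mul_right_comm, hcancel, one_mul]
      _ ≤ ‖q‖ ^ (n + 1) * ‖x‖ := by gcongr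

/-- Bounded by its values on the compact annulus `‖q‖ ≤ ‖x‖ ≤ 1`, `h` extends across `0`, and
Liouville's theorem applies. -/
lemma apply_eq_apply_of_apply_mul_eq (hq0 : 0 < ‖q‖) (hq1 : ‖q‖ < 1) {h : ℂ → ℂ}
    (hd : ∀ x, x ≠ 0 → DifferentiableAt ℂ h x) (he : ∀ x, x ≠ 0 → h (q * x) = h x) {x y : ℂ}
    (hx : x ≠ 0) (hy : y ≠ 0) : h x = h y := by
  have hq : q ≠ 0 := norm_pos_iff.mp hq0
  set K := Metric.closedBall (0 : ℂ) 1 \ Metric.ball 0 ‖q‖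
  have hK0 : ∀ z ∈ K, z ≠ 0 := by
    rintro z ⟨-, hz⟩ rfl
    exact hz (Metric.mem_ball_self hq0)
  obtain ⟨C, hC⟩ := ((isCompact_closedBall 0 1).diff Metric.isOpen_ball)
    |>.exists_bound_of_continuousOn fun z hz => (hd z (hK0 z hz)).continuousAt.continuousWithinAt
  have hbound : ∀ z, z ≠ 0 → ‖h z‖ ≤ C := by
    intro z hz
    obtain ⟨n, hn⟩ := exists_zpow_mul_mem_annulus hq0 hq1 hz
    have hinv : h (q ^ n * z) = h z :=
      (iff_of_qCong hq (p := fun w => h w = h z) (fun w hw => by rw [he w hw]) hz ⟨n, rfl⟩).mpr rfl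
    exact hinv ▸ hC _ hn
  set H := Function.update h 0 (limUnder (𝓝[≠] (0 : ℂ)) h)
  have hH : Differentiable ℂ H := by
    rw [← differentiableOn_univ]
    refine Complex.differentiableOn_update_limUnder_of_bddAbove Filter.univ_mem
      (fun z hz => (hd z hz.2).differentiableWithinAt) ⟨C, ?_⟩
    rintro _ ⟨z, hz, rfl⟩
    exact hbound z hz.2
  have hHb : Bornology.IsBounded (Set.range H) := by
    refine isBounded_iff_forall_norm_le.mpr ⟨max C ‖H 0‖, ?_⟩
    rintro _ ⟨z, rfl⟩
    by_cases hz : z = 0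
    · exact hz ▸ le_max_right _ _
    · rw [show H z = h z from Function.update_of_ne hz _ _]
      exact le_max_of_le_left (hbound z hz)
  simpa [H, Function.update_of_ne hx, Function.update_of_ne hy] using
    hH.apply_eq_apply_of_bounded hHb x y

lemma QDiffEq.apply_mul_eq (hg : QDiffEq q 0 l g) {x : ℂ} (hx : x ≠ 0) : g (q * x) = l * g x := by
  simpa using hg x hx

/-- `y ↦ g(y) g(x²/y)` is `q`-periodic, so one zero of `g` forces `g(x)² = 0`. -/
lemma QDiffEq.eq_zero_of_apply_eq_zero (hq0 : 0 < ‖q‖) (hq1 : ‖q‖ < 1) (hg : QDiffEq q 0 l g)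
    (hd : ∀ x, x ≠ 0 → DifferentiableAt ℂ g x) {p : ℂ} (hp : p ≠ 0) (hgp : g p = 0) {x : ℂ}
    (hx : x ≠ 0) : g x = 0 := by
  have hq : q ≠ 0 := norm_pos_iff.mp hq0
  have hx2 : x ^ 2 ≠ 0 := pow_ne_zero 2 hx
  have hG := apply_eq_apply_of_apply_mul_eq hq0 hq1 (h := fun y => g y * g (x ^ 2 / y))
    (fun y hy => (hd y hy).mul ((hd _ (div_ne_zero hx2 hy)).comp y
      ((differentiableAt_const _).div differentiableAt_id hy)))
    (fun y hy => by
      have h := hg.apply_mul_eq (div_ne_zero hx2 (mul_ne_zero hq hy))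
      rw [mul_div_assoc', mul_div_mul_left _ _ hq] at h
      simp only [hg.apply_mul_eq hy, h]
      ring) hx hp
  simpa [hgp, pow_two, hx] using hG

lemma QDiffEq.exists_mul_deriv_eq (hq0 : 0 < ‖q‖) (hq1 : ‖q‖ < 1) (hg : QDiffEq q 0 l g)
    (hd : ∀ x, x ≠ 0 → DifferentiableAt ℂ g x) (hne : ∀ x, x ≠ 0 → g x ≠ 0) :
    ∃ c : ℂ, ∀ x, x ≠ 0 → x * deriv g x = c * g x := by
  have hq : q ≠ 0 := norm_pos_iff.mp hq0
  have hd' : ∀ x, x ≠ 0 → DifferentiableAt ℂ (deriv g) x := fun x hx =>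
    ((DifferentiableOn.analyticOnNhd (fun z hz => (hd z hz).differentiableWithinAt)
      isOpen_compl_singleton).deriv x hx).differentiableAt
  have hderiv : ∀ x, x ≠ 0 → q * deriv g (q * x) = l * deriv g x := by
    intro x hx
    have hev : (fun y => g (q * y)) =ᶠ[𝓝 x] fun y => l * g y := by
      filter_upwards [eventually_ne_nhds hx] with y hy using hg.apply_mul_eq hy
    simpa only [deriv_comp_mul_left, deriv_const_mul_field, smul_eq_mul] using hev.deriv_eq
  refine ⟨deriv g 1 / g 1, fun x hx => ?_⟩
  have hv := apply_eq_apply_of_apply_mul_eq hq0 hq1 (h := fun y => y * deriv g y / g y)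
    (fun y hy => (differentiableAt_id.mul (hd' y hy)).div (hd y hy) (hne y hy))
    (fun y hy => by
      have hl : l ≠ 0 := fun h0 =>
        hne _ (mul_ne_zero hq hy) (by rw [hg.apply_mul_eq hy, h0, zero_mul])
      simp only [mul_assoc, hg.apply_mul_eq hy]
      field_simp
      rw [hderiv y hy]) hx one_ne_zero
  simp only [one_mul] at hv
  rw [← hv]
  field_simp [hne x hx]

/-- `t ↦ g(eᵗ) e^(-ct)` is constant, and its `2πi`-periodicity forces `c ∈ ℤ`. -/
lemma exists_eq_mul_zpow_of_mul_deriv_eq (hd : ∀ x, x ≠ 0 → DifferentiableAt ℂ g x)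
    (hc : ∀ x, x ≠ 0 → x * deriv g x = c * g x) (hg1 : g 1 ≠ 0) :
    ∃ n : ℤ, ∀ x, x ≠ 0 → g x = g 1 * x ^ n := by
  set ψ : ℂ → ℂ := fun t => g (Complex.exp t) * Complex.exp (-(c * t))
  have hψ' (t : ℂ) : HasDerivAt ψ 0 t := by
    have h : HasDerivAt ψ (deriv g (Complex.exp t) * Complex.exp t * Complex.exp (-(c * t)) +
        g (Complex.exp t) * (Complex.exp (-(c * t)) * -(c * 1))) t :=
      ((hd _ (Complex.exp_ne_zero t)).hasDerivAt.comp t (Complex.hasDerivAt_exp t)).mul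
        ((hasDerivAt_id' t).const_mul c).neg.cexp
    convert h using 1
    linear_combination -Complex.exp (-(c * t)) * hc _ (Complex.exp_ne_zero t)
  have hψ (t : ℂ) : ψ t = g 1 := by
    simpa [ψ] using is_const_of_deriv_eq_zero (fun t => (hψ' t).differentiableAt)
      (fun t => (hψ' t).deriv) t 0
  obtain ⟨m, hm⟩ : ∃ m : ℤ, c = m := by
    have h := hψ (2 * Real.pi * Complex.I)
    simp only [ψ, Complex.exp_two_pi_mul_I] at h
    obtain ⟨n, hn⟩ := Complex.exp_eq_one_iff.mp (mul_left_cancel₀ hg1 (h.trans (mul_one _).symm))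
    exact ⟨-n, mul_right_cancel₀ Complex.two_pi_I_ne_zero (by push_cast; linear_combination -hn)⟩
  refine ⟨m, fun x hx => ?_⟩
  have h := hψ (Complex.log x)
  simp only [ψ, Complex.exp_log hx, hm, Complex.exp_neg, Complex.exp_int_mul] at h
  rw [← h]
  field_simp [zpow_ne_zero m hx]

lemma QDiffEq.eq_zero_of_not_qCong (hq0 : 0 < ‖q‖) (hq1 : ‖q‖ < 1) (hg : QDiffEq q 0 l g)
    (hd : ∀ x, x ≠ 0 → DifferentiableAt ℂ g x) (hl : ¬ qCong q l 1) {x : ℂ} (hx : x ≠ 0) :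
    g x = 0 := by
  by_contra hgx
  have hne : ∀ y, y ≠ 0 → g y ≠ 0 := fun y hy h0 =>
    hgx (hg.eq_zero_of_apply_eq_zero hq0 hq1 hd hy h0 hx)
  obtain ⟨c, hc⟩ := hg.exists_mul_deriv_eq hq0 hq1 hd hne
  obtain ⟨n, hn⟩ := exists_eq_mul_zpow_of_mul_deriv_eq hd hc (hne 1 one_ne_zero)
  have hq : q ≠ 0 := norm_pos_iff.mp hq0
  have h := hg.apply_mul_eq one_ne_zero
  rw [mul_one, hn q hq] at h
  refine hl ⟨n, ?_⟩
  rw [mul_one]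
  exact mul_left_cancel₀ (hne 1 one_ne_zero) (by linear_combination -h)

theorem QDiffEq.eq_zero_of_apply_eq_zero_of_apply_eq_zero (hq0 : 0 < ‖q‖) (hq1 : ‖q‖ < 1)
    (hholo : ∀ x, x ≠ 0 → DifferentiableAt ℂ f x) (hf : QDiffEq q 2 c f) (hc : c ≠ 0)
    (ha : a ≠ 0) (hb : b ≠ 0) (hba : ¬ qCong q b a) (hcab : ¬ qCong q c (a * b))
    (hfa : f a = 0) (hfb : f b = 0) {x : ℂ} (hx : x ≠ 0) : f x = 0 := by
  obtain ⟨g, hg, hfg, hgeq⟩ := hf.exists_eq_mul_qTheta hq0 hq1 hholo hc ha hfa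
  have hgb : g b = 0 := by
    have hθ : qTheta q a b ≠ 0 := (qTheta_eq_zero_iff hq0 hq1 ha hb).not.mpr hba
    simpa [hfb, hθ] using hfg b hb
  obtain ⟨h, hh, hgh, hheq⟩ :=
    hgeq.exists_eq_mul_qTheta hq0 hq1 hg (div_ne_zero hc (neg_ne_zero.mpr ha)) hb hgb
  have hh0 : h x = 0 := by
    refine hheq.eq_zero_of_not_qCong hq0 hq1 hh (fun ⟨n, hn⟩ => hcab ⟨n, ?_⟩) hx
    field_simp at hn
    linear_combination hn
  rw [hfg x hx, hgh x hx, hh0, zero_mul, zero_mul]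

end QDifference

lemma mul_eq_mul_of_det_eq_zero {A : Matrix (Fin 2) (Fin 2) ℂ} (hA : A.det = 0) (j j' : Fin 2) :
    A 0 j * A 1 j' = A 0 j' * A 1 j := by
  rw [det_fin_two] at hA
  fin_cases j <;> fin_cases j' <;> simp only [Fin.zero_eta, Fin.mk_one] <;>
    first | ring1 | linear_combination hA | linear_combination -hA

lemma IsNzCol.eq_zero_of_fst_eq_zero {A : Matrix (Fin 2) (Fin 2) ℂ} {f g : ℂ} (h : IsNzCol A f g)
    (hA : A.det = 0) (hf : f = 0) (j : Fin 2) : A 0 j = 0 := by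
  obtain ⟨l, rfl, rfl, hne⟩ := h
  have := mul_eq_mul_of_det_eq_zero hA l j
  rw [hf, zero_mul] at this
  exact (mul_eq_zero.mp this.symm).resolve_right fun h0 => hne ⟨hf, h0⟩

lemma IsNzCol.eq_zero_of_snd_eq_zero {A : Matrix (Fin 2) (Fin 2) ℂ} {f g : ℂ} (h : IsNzCol A f g)
    (hA : A.det = 0) (hg : g = 0) (j : Fin 2) : A 1 j = 0 := by
  obtain ⟨l, rfl, rfl, hne⟩ := h
  have := mul_eq_mul_of_det_eq_zero hA l j
  rw [hg, mul_zero] at this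
  exact (mul_eq_zero.mp this).resolve_left fun h0 => hne ⟨h0, hg⟩

lemma exists_row_eq_zero_of_isNzCol {A B : Matrix (Fin 2) (Fin 2) ℂ} (hA : A.det = 0)
    (hB : B.det = 0) {f₁ g₁ f₂ g₂ : ℂ} (h₁ : IsNzCol A f₁ g₁) (h₂ : IsNzCol B f₂ g₂)
    (h₁₂ : f₁ * g₂ = 0) (h₂₁ : f₂ * g₁ = 0) : ∃ i, (∀ j, A i j = 0) ∧ ∀ j, B i j = 0 := by
  obtain ⟨-, -, -, hne₁⟩ := id h₁
  obtain ⟨-, -, -, hne₂⟩ := id h₂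
  rcases mul_eq_zero.mp h₁₂ with hf₁ | hg₂ <;> rcases mul_eq_zero.mp h₂₁ with hf₂ | hg₁
  · exact ⟨0, h₁.eq_zero_of_fst_eq_zero hA hf₁, h₂.eq_zero_of_fst_eq_zero hB hf₂⟩
  · exact (hne₁ ⟨hf₁, hg₁⟩).elim
  · exact (hne₂ ⟨hf₂, hg₂⟩).elim
  · exact ⟨1, h₁.eq_zero_of_snd_eq_zero hA hg₁, h₂.eq_zero_of_snd_eq_zero hB hg₂⟩

lemma cross_eq_of_det_eq_zero {A B : Matrix (Fin 2) (Fin 2) ℂ} (hA : A.det = 0) (hB : B.det = 0)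
    (j₁ j₁' j₂ j₂' : Fin 2) :
    A 0 j₁ * B 1 j₂ * (B 0 j₂' * A 1 j₁') = A 0 j₁' * B 1 j₂' * (B 0 j₂ * A 1 j₁) := by
  linear_combination (B 0 j₂' * B 1 j₂) * mul_eq_mul_of_det_eq_zero hA j₁ j₁'
    - (A 0 j₁' * A 1 j₁) * mul_eq_mul_of_det_eq_zero hB j₂ j₂'

lemma cross_eq_of_isNzCol {A B : Matrix (Fin 2) (Fin 2) ℂ} (hA : A.det = 0) (hB : B.det = 0)
    {f₁ g₁ f₂ g₂ f₁' g₁' f₂' g₂' : ℂ} (h₁ : IsNzCol A f₁ g₁) (h₂ : IsNzCol B f₂ g₂)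
    (h₁' : IsNzCol A f₁' g₁') (h₂' : IsNzCol B f₂' g₂') :
    f₁ * g₂ * (f₂' * g₁') = f₁' * g₂' * (f₂ * g₁) := by
  obtain ⟨j₁, rfl, rfl, -⟩ := h₁
  obtain ⟨j₂, rfl, rfl, -⟩ := h₂
  obtain ⟨j₁', rfl, rfl, -⟩ := h₁'
  obtain ⟨j₂', rfl, rfl, -⟩ := h₂'
  exact cross_eq_of_det_eq_zero hA hB j₁ j₁' j₂ j₂'

lemma cross_eq_of_isNzCol_diagonal_mul_mul {A B : Matrix (Fin 2) (Fin 2) ℂ} (hA : A.det = 0)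
    (hB : B.det = 0) (Γ Δ : Fin 2 → ℂ) {f₁ g₁ f₂ g₂ p₁ q₁ p₂ q₂ : ℂ} (h₁ : IsNzCol A f₁ g₁)
    (h₂ : IsNzCol B f₂ g₂) (hp₁ : IsNzCol (diagonal Γ * A * diagonal Δ) p₁ q₁)
    (hp₂ : IsNzCol (diagonal Γ * B * diagonal Δ) p₂ q₂) :
    f₁ * g₂ * (p₂ * q₁) = p₁ * q₂ * (f₂ * g₁) := by
  obtain ⟨j₁, rfl, rfl, -⟩ := h₁
  obtain ⟨j₂, rfl, rfl, -⟩ := h₂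
  obtain ⟨l₁, rfl, rfl, -⟩ := hp₁
  obtain ⟨l₂, rfl, rfl, -⟩ := hp₂
  simp only [mul_diagonal, diagonal_mul]
  linear_combination (Γ 0 * Γ 1 * Δ l₁ * Δ l₂) * cross_eq_of_det_eq_zero hA hB j₁ l₁ j₂ l₂

namespace QDifference

variable {q : ℂ} {M : ℂ → Matrix (Fin 2) (Fin 2) ℂ} {c : Fin 2 → Fin 2 → ℂ}

lemma qDiffEq_entry {ρ σv : Fin 2 → ℂ} (hσ0 : ∀ j, σv j ≠ 0)
    (heqM : ∀ x : ℂ, x ≠ 0 → (x ^ 2) • (M (q * x) * diagonal σv) = diagonal ρ * M x)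
    (i j : Fin 2) : QDiffEq q 2 (ρ i / σv j) (fun x => M x i j) := by
  intro x hx
  have h := congrFun (congrFun (heqM x hx) i) j
  simp only [Matrix.smul_apply, mul_diagonal, diagonal_mul, smul_eq_mul] at h
  rw [div_mul_eq_mul_div, eq_div_iff (hσ0 j)]
  linear_combination h

lemma QDiffEq.det {k : ℕ} {A : ℂ → Matrix (Fin 2) (Fin 2) ℂ}
    (hA : ∀ i j, QDiffEq q k (c i j) (fun x => A x i j)) (hc : c 0 0 * c 1 1 = c 0 1 * c 1 0) :
    QDiffEq q (2 * k) (c 0 0 * c 1 1) (fun x => (A x).det) := by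
  intro x hx
  simp only [det_fin_two, pow_mul']
  linear_combination (x ^ k * A (q * x) 1 1) * hA 0 0 x hx + (c 0 0 * A x 0 0) * hA 1 1 x hx
    - (x ^ k * A (q * x) 1 0) * hA 0 1 x hx - (c 0 1 * A x 0 1) * hA 1 0 x hx
    + (A x 0 1 * A x 1 0) * hc

lemma det_eq_zero_of_row_eq_zero_of_row_eq_zero (hq0 : 0 < ‖q‖) (hq1 : ‖q‖ < 1)
    (hholo : MatHolo M) (hM : ∀ i j, QDiffEq q 2 (c i j) (fun x => M x i j))
    (hc0 : ∀ i j, c i j ≠ 0) {x₁ x₂ : ℂ} (hx₁ : x₁ ≠ 0) (hx₂ : x₂ ≠ 0) (h₂₁ : ¬ qCong q x₂ x₁)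
    {i : Fin 2} (hNS : ∀ j, ¬ qCong q (c i j) (x₁ * x₂)) (h₁ : ∀ j, M x₁ i j = 0)
    (h₂ : ∀ j, M x₂ i j = 0) {x : ℂ} (hx : x ≠ 0) : (M x).det = 0 :=
  det_eq_zero_of_row_eq_zero i fun j => (hM i j).eq_zero_of_apply_eq_zero_of_apply_eq_zero hq0 hq1
    (hholo i j) (hc0 i j) hx₁ hx₂ h₂₁ (hNS j) (h₁ j) (h₂ j) hx

theorem apply_ne_zero_of_det_eq_zero (hq0 : 0 < ‖q‖) (hq1 : ‖q‖ < 1) (hholo : MatHolo M)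
    (hM : ∀ i j, QDiffEq q 2 (c i j) (fun x => M x i j)) (hc0 : ∀ i j, c i j ≠ 0)
    (hc : c 0 0 * c 1 1 = c 0 1 * c 1 0) {x₀ : ℂ} (hx₀ : x₀ ≠ 0) (hdet₀ : (M x₀).det ≠ 0)
    {a b₁ b₂ b₃ : ℂ} (ha : a ≠ 0) (hb₁ : b₁ ≠ 0) (hb₂ : b₂ ≠ 0) (h₂₁ : ¬ qCong q b₂ b₁)
    (h₁a : ¬ qCong q b₁ a) (h₂a : ¬ qCong q b₂ a) (h₃a : ¬ qCong q b₃ a)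
    (hFR : qCong q (a * b₁ * b₂ * b₃) (c 0 0 * c 1 1)) (hdet₁ : (M b₁).det = 0)
    (hdet₂ : (M b₂).det = 0) : M a ≠ 0 := by
  intro hMa
  have hq : q ≠ 0 := norm_pos_iff.mp hq0
  choose G hG hMG hGeq using fun i j => (hM i j).exists_eq_mul_qTheta hq0 hq1 (hholo i j)
    (hc0 i j) ha (by simp [hMa])
  set D : ℂ → ℂ := fun x => (Matrix.of fun i j => G i j x).det
  have hdetM : ∀ x, x ≠ 0 → (M x).det = qTheta q a x ^ 2 * D x := by
    intro x hx
    simp only [D, det_fin_two, of_apply, hMG _ _ x hx]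
    ring
  have hD : QDiffEq q 2 (c 0 0 / -a * (c 1 1 / -a)) D :=
    QDiffEq.det (A := fun x => Matrix.of fun i j => G i j x) hGeq
      (by field_simp; linear_combination hc)
  have hDholo : ∀ x, x ≠ 0 → DifferentiableAt ℂ D x := by
    intro x hx
    simp only [D, det_fin_two, of_apply]
    exact ((hG 0 0 x hx).mul (hG 1 1 x hx)).sub ((hG 0 1 x hx).mul (hG 1 0 x hx))
  have hDb {b : ℂ} (hb : b ≠ 0) (hba : ¬ qCong q b a) (hdet : (M b).det = 0) : D b = 0 := by
    have hθ := (qTheta_eq_zero_iff hq0 hq1 ha hb).not.mpr hba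
    simpa [hθ] using (hdetM b hb).symm.trans hdet
  have hres : ¬ qCong q (c 0 0 / -a * (c 1 1 / -a)) (b₁ * b₂) := by
    rintro ⟨n, hn⟩
    obtain ⟨m, hm⟩ := hFR
    refine h₃a ⟨m + n, mul_left_cancel₀ (mul_ne_zero (mul_ne_zero ha hb₁) hb₂) ?_⟩
    field_simp at hn
    rw [zpow_add₀ hq]
    linear_combination hm + q ^ m * hn
  apply hdet₀
  rw [hdetM x₀ hx₀, hD.eq_zero_of_apply_eq_zero_of_apply_eq_zero hq0 hq1 hDholo
    (mul_ne_zero (div_ne_zero (hc0 0 0) (neg_ne_zero.mpr ha)) (div_ne_zero (hc0 1 1)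
    (neg_ne_zero.mpr ha))) hb₁ hb₂ h₂₁ hres (hDb hb₁ h₁a hdet₁) (hDb hb₂ h₂a hdet₂) hx₀, mul_zero]

end QDifference

end

theorem stmt10_general (q : ℂ) (hq0 : 0 < ‖q‖) (hq1 : ‖q‖ < 1)
    (ρ σv : Fin 2 → ℂ) (xs : Fin 4 → ℂ)
    (hρ0 : ∀ i, ρ i ≠ 0) (hσ0 : ∀ i, σv i ≠ 0) (hx0 : ∀ k, xs k ≠ 0)
    (hFR : qCong q (xs 0 * xs 1 * xs 2 * xs 3) (ρ 0 * ρ 1 / (σv 0 * σv 1)))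
    (hNRx : ∀ k l : Fin 4, k ≠ l → ¬ qCong q (xs k) (xs l))
    (hNS : ∀ i j : Fin 2, ¬ qCong q (ρ i / σv j) (xs 0 * xs 1))
    (M : ℂ → Matrix (Fin 2) (Fin 2) ℂ) (hM : M ∈ FJS q ρ σv xs) :
    (M (xs 0) ≠ 0 ∧ M (xs 1) ≠ 0) ∧
    ∀ f1 g1 f2 g2 : ℂ, IsNzCol (M (xs 0)) f1 g1 → IsNzCol (M (xs 1)) f2 g2 →
      ¬(f1 * g2 = 0 ∧ f2 * g1 = 0) ∧
      (∀ f1' g1' f2' g2' : ℂ,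
        IsNzCol (M (xs 0)) f1' g1' → IsNzCol (M (xs 1)) f2' g2' →
        f1 * g2 * (f2' * g1') = f1' * g2' * (f2 * g1)) ∧
      (∀ Γ Δ : Fin 2 → ℂ, (∀ i, Γ i ≠ 0) → (∀ i, Δ i ≠ 0) →
        ∀ p1 q1 p2 q2 : ℂ,
          IsNzCol (Matrix.diagonal Γ * M (xs 0) *
            Matrix.diagonal (fun i => (Δ i)⁻¹)) p1 q1 →
          IsNzCol (Matrix.diagonal Γ * M (xs 1) *
            Matrix.diagonal (fun i => (Δ i)⁻¹)) p2 q2 →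
          f1 * g2 * (p2 * q1) = p1 * q2 * (f2 * g1)) := by
  obtain ⟨hholo, heqM, ⟨x₀, hx₀, hdet₀⟩, hdet⟩ := hM
  have hM := QDifference.qDiffEq_entry hσ0 heqM
  have hc0 (i j : Fin 2) : ρ i / σv j ≠ 0 := div_ne_zero (hρ0 i) (hσ0 j)
  have hc : ρ 0 / σv 0 * (ρ 1 / σv 1) = ρ 0 / σv 1 * (ρ 1 / σv 0) := by ring
  have hFR' {a b₁ b₂ b₃ : ℂ} (h : a * b₁ * b₂ * b₃ = xs 0 * xs 1 * xs 2 * xs 3) :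
      qCong q (a * b₁ * b₂ * b₃) (ρ 0 / σv 0 * (ρ 1 / σv 1)) := by
    rwa [h, div_mul_div_comm]
  refine ⟨⟨?_, ?_⟩, fun f1 g1 f2 g2 h1 h2 => ⟨fun ⟨h₁₂, h₂₁⟩ => ?_,
    fun _ _ _ _ h1' h2' => cross_eq_of_isNzCol (hdet 0) (hdet 1) h1 h2 h1' h2',
    fun Γ Δ _ _ _ _ _ _ hp1 hp2 => cross_eq_of_isNzCol_diagonal_mul_mul (hdet 0) (hdet 1) Γ _
      h1 h2 hp1 hp2⟩⟩
  · exact QDifference.apply_ne_zero_of_det_eq_zero hq0 hq1 hholo hM hc0 hc hx₀ hdet₀ (hx0 0)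
      (hx0 1) (hx0 2) (hNRx 2 1 (by decide)) (hNRx 1 0 (by decide)) (hNRx 2 0 (by decide))
      (hNRx 3 0 (by decide)) (hFR' rfl) (hdet 1) (hdet 2)
  · exact QDifference.apply_ne_zero_of_det_eq_zero hq0 hq1 hholo hM hc0 hc hx₀ hdet₀ (hx0 1)
      (hx0 2) (hx0 3) (hNRx 3 2 (by decide)) (hNRx 2 1 (by decide)) (hNRx 3 1 (by decide))
      (hNRx 0 1 (by decide)) (hFR' (by ring)) (hdet 2) (hdet 3)
  · obtain ⟨i, hrow₀, hrow₁⟩ := exists_row_eq_zero_of_isNzCol (hdet 0) (hdet 1) h1 h2 h₁₂ h₂₁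
    exact hdet₀ (QDifference.det_eq_zero_of_row_eq_zero_of_row_eq_zero hq0 hq1 hholo hM hc0
      (hx0 0) (hx0 1) (hNRx 1 0 (by decide)) (hNS i) hrow₀ hrow₁ hx₀)

/-- The projective invariant `Π(M) = (f₁g₂ : f₂g₁)` is well defined and invariant under
the diagonal action. -/
theorem stmt10 (q : ℂ) (hq0 : 0 < ‖q‖) (hq1 : ‖q‖ < 1)
    (ρ σv : Fin 2 → ℂ) (xs : Fin 4 → ℂ)
    (hρ0 : ∀ i, ρ i ≠ 0) (hσ0 : ∀ i, σv i ≠ 0) (hx0 : ∀ k, xs k ≠ 0)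
    (hFR : qCong q (xs 0 * xs 1 * xs 2 * xs 3) (ρ 0 * ρ 1 / (σv 0 * σv 1)))
    (hNRρ : ¬ qCong q (ρ 0) (ρ 1)) (hNRσ : ¬ qCong q (σv 0) (σv 1))
    (hNRx : ∀ k l : Fin 4, k ≠ l → ¬ qCong q (xs k) (xs l))
    (hNS : ∀ i j : Fin 2, ¬ qCong q (ρ i / σv j) (xs 0 * xs 1))
    (M : ℂ → Matrix (Fin 2) (Fin 2) ℂ) (hM : M ∈ FJS q ρ σv xs) :
    (M (xs 0) ≠ 0 ∧ M (xs 1) ≠ 0) ∧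
    ∀ f1 g1 f2 g2 : ℂ, IsNzCol (M (xs 0)) f1 g1 → IsNzCol (M (xs 1)) f2 g2 →
      ¬(f1 * g2 = 0 ∧ f2 * g1 = 0) ∧
      (∀ f1' g1' f2' g2' : ℂ,
        IsNzCol (M (xs 0)) f1' g1' → IsNzCol (M (xs 1)) f2' g2' →
        f1 * g2 * (f2' * g1') = f1' * g2' * (f2 * g1)) ∧
      (∀ Γ Δ : Fin 2 → ℂ, (∀ i, Γ i ≠ 0) → (∀ i, Δ i ≠ 0) →
        ∀ p1 q1 p2 q2 : ℂ,
          IsNzCol (Matrix.diagonal Γ * M (xs 0) *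
            Matrix.diagonal (fun i => (Δ i)⁻¹)) p1 q1 →
          IsNzCol (Matrix.diagonal Γ * M (xs 1) *
            Matrix.diagonal (fun i => (Δ i)⁻¹)) p2 q2 →
          f1 * g2 * (p2 * q1) = p1 * q2 * (f2 * g1)) :=
  stmt10_general q hq0 hq1 ρ σv xs hρ0 hσ0 hx0 hFR hNRx hNS M hM
end

section
/- (Gauge freedom of Mano decompositions.) Let M ∈ F. (i) If (P, Q) is a Mano decomposition of M with factor C, Λ ∈ GL₂(O(ℂ*)), and C′ ∈ GL₂(ℂ) satisfies Λ(qx) C = C′ Λ(x) for all x ≠ 0, then (P Λ^{−1}, Λ Q) is a Mano decomposition of M with factor C′. (ii) Conversely, if (P, Q) is a Mano decomposition of M with factor C and (P′, Q′) is a Mano decomposition of M with factor C′, then there exists Λ ∈ GL₂(O(ℂ*)) such that P′ = P Λ^{−1}, Q′ = Λ Q, and Λ(qx) C = C′ Λ(x) for all x ≠ 0. -/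
/-!
For a Mano decomposition `M = P Q` with factor `C`, taking determinants in `x P(qx) C = R P(x)`
shows that `det P` is a theta function of degree 2: `x² det P(qx) = (ρ₁ρ₂ / det C) det P(x)`.
By the functional equation, `∮ (det P)'/det P` over `|x| = r` exceeds the integral over
`|x| = |q| r` by `2πi · 2`, while by the argument principle the difference is `2πi` times the
number of zeros in the annulus between them. As `x₁, x₂` are incongruent zeros, these are all the
zeros of `det P` modulo `q^ℤ`. Dividing the functional equation of `det M` by that of `det P`
makes `det Q` a theta function of degree 2 as well, vanishing exactly on the classes of `x₃, x₄`.
So at every `x ≠ 0` either `P` and `P'` are both invertible or `Q` and `Q'` are, and the gauge is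
`Λ = P'⁻¹ P` on the first set and `Λ = Q' Q⁻¹` on the second; the two agree where both make sense
since `P Q = P' Q'`. Finally `P'(qx) (Λ(qx) C - C' Λ(x)) = 0` identically, and `det P'(q ·)`
vanishes only on a discrete set, which gives `Λ(qx) C = C' Λ(x)`.
-/

open Matrix

/-- `GL₂(O(ℂ*))`: matrices holomorphic on `ℂ*` and invertible at every `x ≠ 0`. -/
def GLO (Λ : ℂ → Matrix (Fin 2) (Fin 2) ℂ) : Prop :=
  MatHolo Λ ∧ ∀ x : ℂ, x ≠ 0 → IsUnit (Λ x).det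

/-- A Mano decomposition of `M` with factor `C ∈ GL₂(ℂ)`: `M = P Q`,
`x P(qx) C = R P(x)`, `det P ≢ 0` and `det P(x₁) = det P(x₂) = 0`. -/
def Mano (q : ℂ) (ρ : Fin 2 → ℂ) (x1 x2 : ℂ) (M : ℂ → Matrix (Fin 2) (Fin 2) ℂ)
    (C : Matrix (Fin 2) (Fin 2) ℂ) (P Q : ℂ → Matrix (Fin 2) (Fin 2) ℂ) : Prop :=
  IsUnit C.det ∧ MatHolo P ∧ MatHolo Q ∧
  (∀ x : ℂ, x ≠ 0 → M x = P x * Q x) ∧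
  (∀ x : ℂ, x ≠ 0 → x • (P (q * x) * C) = Matrix.diagonal ρ * P x) ∧
  (∃ x : ℂ, x ≠ 0 ∧ (P x).det ≠ 0) ∧
  (P x1).det = 0 ∧ (P x2).det = 0

open Complex Metric Filter Set Topology Real

section PuncturedPlane

variable {f g h : ℂ → ℂ}

lemma isPreconnected_compl_zero : IsPreconnected ({0}ᶜ : Set ℂ) :=
  (isConnected_compl_singleton_of_one_lt_rank (by simp) 0).isPreconnected

lemma DifferentiableOn.eventually_codiscreteWithin_ne_zero (hf : DifferentiableOn ℂ f {0}ᶜ)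
    (hne : ∃ x, x ≠ 0 ∧ f x ≠ 0) : ∀ᶠ z in codiscreteWithin {0}ᶜ, f z ≠ 0 := by
  obtain ⟨x, hx, hfx⟩ := hne
  exact ((hf.analyticOnNhd isOpen_compl_singleton).eqOn_zero_or_eventually_ne_zero_of_preconnected
    isPreconnected_compl_zero).resolve_left fun h => hfx (h hx)

lemma DifferentiableOn.eventually_nhdsNE_ne_zero (hf : DifferentiableOn ℂ f {0}ᶜ)
    (hne : ∃ x, x ≠ 0 ∧ f x ≠ 0) {z : ℂ} (hz : z ≠ 0) : ∀ᶠ w in 𝓝[≠] z, f w ≠ 0 := by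
  have h := mem_codiscreteWithin_iff_forall_mem_nhdsNE.mp
    (hf.eventually_codiscreteWithin_ne_zero hne) z hz
  filter_upwards [h, nhdsWithin_le_nhds (isOpen_compl_singleton.mem_nhds hz)] with w hw hw0
  rw [Set.mem_compl_singleton_iff] at hw0
  simpa [hw0] using hw

lemma DifferentiableOn.finite_zeros_of_isCompact (hf : DifferentiableOn ℂ f {0}ᶜ)
    (hne : ∃ x, x ≠ 0 ∧ f x ≠ 0) {K : Set ℂ} (hK : IsCompact K) (hK0 : K ⊆ {0}ᶜ) :
    (K ∩ {z | f z = 0}).Finite := by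
  have := hK.finite_sdiff_of_mem_codiscreteWithin
    (codiscreteWithin_mono hK0 (hf.eventually_codiscreteWithin_ne_zero hne))
  simpa [Set.sdiff_eq, Set.compl_ofPred] using this

lemma DifferentiableOn.analyticOrderAt_ne_top (hf : DifferentiableOn ℂ f {0}ᶜ)
    (hne : ∃ x, x ≠ 0 ∧ f x ≠ 0) {z : ℂ} (hz : z ≠ 0) : analyticOrderAt f z ≠ ⊤ := by
  obtain ⟨x, hx, hfx⟩ := hne
  have hA := hf.analyticOnNhd isOpen_compl_singleton
  exact hA.analyticOrderAt_ne_top_of_isPreconnected isPreconnected_compl_zero hx hz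
    (by simp [(hA x hx).analyticOrderAt_eq_zero.mpr hfx])

lemma DifferentiableOn.one_le_analyticOrderNatAt (hf : DifferentiableOn ℂ f {0}ᶜ)
    (hne : ∃ x, x ≠ 0 ∧ f x ≠ 0) {z : ℂ} (hz : z ≠ 0) (hfz : f z = 0) :
    1 ≤ analyticOrderNatAt f z := by
  have hA : AnalyticAt ℂ f z := hf.analyticOnNhd isOpen_compl_singleton z hz
  rw [Nat.one_le_iff_ne_zero, analyticOrderNatAt, Ne, ENat.toNat_eq_zero, not_or]
  exact ⟨analyticOrderAt_ne_zero.mpr ⟨hA, hfz⟩, hf.analyticOrderAt_ne_top hne hz⟩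

lemma DifferentiableOn.eq_zero_of_mul_eq_zero (hg : DifferentiableOn ℂ g {0}ᶜ)
    (hne : ∃ x, x ≠ 0 ∧ g x ≠ 0) (hh : ∀ x, x ≠ 0 → ContinuousAt h x)
    (hgh : ∀ x, x ≠ 0 → g x * h x = 0) {x : ℂ} (hx : x ≠ 0) : h x = 0 := by
  refine tendsto_nhds_unique ((hh x hx).tendsto.mono_left nhdsWithin_le_nhds)
    (tendsto_const_nhds (x := (0 : ℂ)) (f := 𝓝[≠] x) |>.congr' ?_)
  filter_upwards [hg.eventually_nhdsNE_ne_zero hne hx,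
    nhdsWithin_le_nhds (isOpen_compl_singleton.mem_nhds hx)] with w hgw hw
  exact ((mul_eq_zero.mp (hgh w hw)).resolve_left hgw).symm

end PuncturedPlane

section ArgumentPrinciple

variable {f g : ℂ → ℂ} {s r t : ℝ} {z₀ : ℂ}

lemma DifferentiableOn.differentiableAt_logDeriv (hf : DifferentiableOn ℂ f {0}ᶜ) {z : ℂ}
    (hz : z ≠ 0) (hfz : f z ≠ 0) : DifferentiableAt ℂ (logDeriv f) z := by
  have hA := hf.analyticOnNhd isOpen_compl_singleton
  exact ((hA.deriv z hz).differentiableAt).div (hA z hz).differentiableAt hfz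

lemma DifferentiableOn.circleIntegrable_logDeriv (hf : DifferentiableOn ℂ f {0}ᶜ) (ht : 0 < t)
    (hft : ∀ z, ‖z‖ = t → f z ≠ 0) : CircleIntegrable (logDeriv f) 0 t := by
  refine ContinuousOn.circleIntegrable ht.le fun z hz => ?_
  rw [mem_sphere_zero_iff_norm] at hz
  have hz0 : z ≠ 0 := by rintro rfl; simp [ht.ne] at hz
  exact (hf.differentiableAt_logDeriv hz0 (hft z hz)).continuousAt.continuousWithinAt

lemma circleIntegral_eq_of_differentiableAt_annulus (hs : 0 < s) (hsr : s ≤ r)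
    (hg : ∀ z, s ≤ ‖z‖ → ‖z‖ ≤ r → DifferentiableAt ℂ g z) :
    (∮ z in C(0, r), g z) = ∮ z in C(0, s), g z := by
  refine circleIntegral_eq_of_differentiable_on_annulus_off_countable hs hsr countable_empty
    (fun z hz => ?_) (fun z hz => ?_)
  · simp only [Set.mem_sdiff, mem_closedBall_zero_iff, mem_ball_zero_iff, not_lt] at hz
    exact (hg z hz.2 hz.1).continuousAt.continuousWithinAt
  · simp only [Set.mem_sdiff, mem_closedBall_zero_iff, mem_ball_zero_iff, not_le,
      mem_empty_iff_false, not_false_eq_true, and_true] at hz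
    exact hg z hz.2.le hz.1.le

lemma circleIntegral_sub_inv_sub_of_mem_annulus (hs : 0 ≤ s) (hs₀ : s < ‖z₀‖) (hr₀ : ‖z₀‖ < r) :
    (∮ z in C(0, r), (z - z₀)⁻¹) - (∮ z in C(0, s), (z - z₀)⁻¹) = 2 * π * I := by
  have hne : ∀ z, ‖z‖ ≤ s → z - z₀ ≠ 0 := fun z hz h => by
    rw [sub_eq_zero.mp h] at hz; linarith
  rw [circleIntegral.integral_sub_inv_of_mem_ball (by simpa using hr₀),
    circleIntegral_eq_zero_of_differentiable_on_off_countable hs countable_empty, sub_zero]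
  · intro z hz
    exact ((continuousAt_id.sub continuousAt_const).inv₀
      (hne z (mem_closedBall_zero_iff.mp hz))).continuousWithinAt
  · intro z hz
    exact (differentiableAt_id.sub_const z₀).inv (hne z (mem_ball_zero_iff.mp hz.1).le)

lemma DifferentiableOn.exists_eq_sub_mul (hf : DifferentiableOn ℂ f {0}ᶜ) (hz₀ : z₀ ≠ 0)
    (hfz₀ : f z₀ = 0) : ∃ g, DifferentiableOn ℂ g {0}ᶜ ∧ f = fun z => (z - z₀) * g z :=
  ⟨dslope f z₀, (Complex.differentiableOn_dslope (isOpen_compl_singleton.mem_nhds hz₀)).mpr hf,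
    funext fun z => by simpa [hfz₀] using (sub_smul_dslope f z₀ z).symm⟩

lemma analyticOrderNatAt_sub_mul {z : ℂ} (hg : AnalyticAt ℂ g z)
    (hgz : analyticOrderAt g z ≠ ⊤) :
    analyticOrderNatAt (fun w => (w - z₀) * g w) z
      = (if z = z₀ then 1 else 0) + analyticOrderNatAt g z := by
  have hlin : analyticOrderAt (· - z₀) z = if z = z₀ then 1 else 0 := by
    split_ifs with h
    · subst h; simp
    · simp [h]
  rw [show (fun w => (w - z₀) * g w) = (· - z₀) * g from rfl,
    analyticOrderNatAt_mul (by fun_prop) hg (by rw [hlin]; split_ifs <;> simp) hgz,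
    analyticOrderNatAt, hlin]
  split_ifs <;> rfl

lemma DifferentiableOn.sum_analyticOrderNatAt_sub_mul (hg : DifferentiableOn ℂ g {0}ᶜ)
    (hne : ∃ x, x ≠ 0 ∧ g x ≠ 0) {Z : Finset ℂ} (hZ0 : ∀ z ∈ Z, z ≠ 0) (hz₀ : z₀ ∈ Z) :
    ∑ z ∈ Z, analyticOrderNatAt (fun w => (w - z₀) * g w) z
      = ∑ z ∈ Z, analyticOrderNatAt g z + 1 := by
  rw [Finset.sum_congr rfl fun z hz => analyticOrderNatAt_sub_mul
      (hg.analyticOnNhd isOpen_compl_singleton z (hZ0 z hz))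
      (hg.analyticOrderAt_ne_top hne (hZ0 z hz)),
    Finset.sum_add_distrib, Finset.sum_ite_eq' Z z₀, if_pos hz₀, add_comm]

lemma DifferentiableOn.circleIntegral_logDeriv_sub_mul (hg : DifferentiableOn ℂ g {0}ᶜ)
    (ht : 0 < t) (hgt : ∀ z, ‖z‖ = t → g z ≠ 0) (hz₀ : ‖z₀‖ ≠ t) :
    (∮ z in C(0, t), logDeriv (fun w => (w - z₀) * g w) z)
      = (∮ z in C(0, t), (z - z₀)⁻¹) + ∮ z in C(0, t), logDeriv g z := by
  have hsub : ∀ z, ‖z‖ = t → z - z₀ ≠ 0 := fun z hz h => hz₀ (sub_eq_zero.mp h ▸ hz)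
  rw [← circleIntegral.integral_add _ (hg.circleIntegrable_logDeriv ht hgt)]
  · refine circleIntegral.integral_congr ht.le fun z hz => ?_
    rw [mem_sphere_zero_iff_norm] at hz
    have hz0 : z ≠ 0 := by rintro rfl; simp [ht.ne] at hz
    rw [logDeriv_mul z (hsub z hz) (hgt z hz) (by fun_prop)
      (hg.differentiableAt (isOpen_compl_singleton.mem_nhds hz0))]
    simp [logDeriv_apply]
  · refine ContinuousOn.circleIntegrable ht.le fun z hz => ?_
    exact ((continuousAt_id.sub continuousAt_const).inv₀
      (hsub z (mem_sphere_zero_iff_norm.mp hz))).continuousWithinAt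

lemma DifferentiableOn.circleIntegral_logDeriv_eq (hf : DifferentiableOn ℂ f {0}ᶜ) (hs : 0 < s)
    (hsr : s ≤ r) (hf0 : ∀ z, s ≤ ‖z‖ → ‖z‖ ≤ r → f z ≠ 0) :
    (∮ z in C(0, r), logDeriv f z) = ∮ z in C(0, s), logDeriv f z :=
  circleIntegral_eq_of_differentiableAt_annulus hs hsr fun z hzs hzr =>
    hf.differentiableAt_logDeriv (norm_pos_iff.mp (hs.trans_le hzs)) (hf0 z hzs hzr)

theorem DifferentiableOn.circleIntegral_logDeriv_sub_eq (hf : DifferentiableOn ℂ f {0}ᶜ)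
    (hs : 0 < s) (hsr : s < r) (hfs : ∀ z, ‖z‖ = s → f z ≠ 0) (hfr : ∀ z, ‖z‖ = r → f z ≠ 0)
    {Z : Finset ℂ} (hZ : ∀ z ∈ Z, s < ‖z‖ ∧ ‖z‖ < r)
    (hfZ : ∀ z, s < ‖z‖ → ‖z‖ < r → f z = 0 → z ∈ Z) :
    (∮ z in C(0, r), logDeriv f z) - (∮ z in C(0, s), logDeriv f z)
      = 2 * π * I * ∑ z ∈ Z, analyticOrderNatAt f z := by
  have hr : 0 < r := hs.trans hsr
  have hZ0 : ∀ z ∈ Z, z ≠ 0 := fun z hz => norm_pos_iff.mp (hs.trans (hZ z hz).1)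
  obtain ⟨N, hN⟩ : ∃ N, ∑ z ∈ Z, analyticOrderNatAt f z = N := ⟨_, rfl⟩
  rw [hN]
  induction N generalizing f with
  | zero =>
    have hne : ∃ x, x ≠ 0 ∧ f x ≠ 0 := ⟨r, by simp [hr.ne'], hfr r (by simp [hr.le])⟩
    rw [hf.circleIntegral_logDeriv_eq hs hsr.le fun z hzs hzr hfz => ?_, sub_self, Nat.cast_zero,
      mul_zero]
    have hz0 : z ≠ 0 := norm_pos_iff.mp (hs.trans_le hzs)
    rcases hzs.eq_or_lt with hzs | hzs
    · exact hfs z hzs.symm hfz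
    rcases hzr.eq_or_lt with hzr | hzr
    · exact hfr z hzr hfz
    have hzZ := hfZ z hzs hzr hfz
    have := hf.one_le_analyticOrderNatAt hne hz0 hfz
    have := (Finset.sum_eq_zero_iff.mp hN) z hzZ
    omega
  | succ N ih =>
    obtain ⟨z₀, hz₀Z, hz₀⟩ := Finset.exists_ne_zero_of_sum_ne_zero (hN.trans_ne N.succ_ne_zero)
    obtain ⟨g, hg, rfl⟩ := hf.exists_eq_sub_mul (hZ0 z₀ hz₀Z)
      (apply_eq_zero_of_analyticOrderNatAt_ne_zero hz₀)
    have hgs : ∀ z, ‖z‖ = s → g z ≠ 0 := fun z hz => right_ne_zero_of_mul (hfs z hz)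
    have hgr : ∀ z, ‖z‖ = r → g z ≠ 0 := fun z hz => right_ne_zero_of_mul (hfr z hz)
    have hne : ∃ x, x ≠ 0 ∧ g x ≠ 0 := ⟨r, by simp [hr.ne'], hgr r (by simp [hr.le])⟩
    have hgN : ∑ z ∈ Z, analyticOrderNatAt g z = N := by
      rw [hg.sum_analyticOrderNatAt_sub_mul hne hZ0 hz₀Z] at hN
      omega
    have hgZ : ∀ z, s < ‖z‖ → ‖z‖ < r → g z = 0 → z ∈ Z :=
      fun z hzs hzr hgz => hfZ z hzs hzr (by simp [hgz])
    rw [hg.circleIntegral_logDeriv_sub_mul hr hgr (hZ z₀ hz₀Z).2.ne,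
      hg.circleIntegral_logDeriv_sub_mul hs hgs (hZ z₀ hz₀Z).1.ne', add_sub_add_comm,
      circleIntegral_sub_inv_sub_of_mem_annulus hs.le (hZ z₀ hz₀Z).1 (hZ z₀ hz₀Z).2,
      ih hg hgs hgr hgZ hgN]
    push_cast
    ring

end ArgumentPrinciple

lemma circleIntegral_mul_comp (h : ℂ → ℂ) (q : ℂ) (r : ℝ) :
    (∮ z in C(0, r), q * h (q * z)) = ∮ z in C(0, ‖q‖ * r), h z := by
  set F : ℝ → ℂ := fun θ => circleMap 0 (‖q‖ * r) θ * I * h (circleMap 0 (‖q‖ * r) θ)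
  have hrot : ∀ θ : ℝ, q * circleMap 0 r θ = circleMap 0 (‖q‖ * r) (θ + arg q) := fun θ => by
    simp only [circleMap, zero_add, ofReal_mul, ofReal_add, add_mul, Complex.exp_add]
    conv_lhs => rw [← norm_mul_exp_arg_mul_I q]
    ring
  have hF : Function.Periodic F (2 * π) := fun θ => by simp only [F, periodic_circleMap _ _ θ]
  simp only [circleIntegral, deriv_circleMap, smul_eq_mul]
  calc (∫ θ in 0..2 * π, circleMap 0 r θ * I * (q * h (q * circleMap 0 r θ)))
      = ∫ θ in 0..2 * π, F (θ + arg q) :=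
        intervalIntegral.integral_congr fun θ _ => by simp only [F, ← hrot]; ring
    _ = ∫ θ in 0..2 * π, F θ := by
        rw [intervalIntegral.integral_comp_add_right, zero_add, add_comm,
          hF.intervalIntegral_add_eq (arg q) 0, zero_add]

lemma closedBall_sdiff_ball_subset_compl_zero {s r : ℝ} (hs : 0 < s) :
    closedBall (0 : ℂ) r \ ball 0 s ⊆ {0}ᶜ :=
  fun _ hz h => hz.2 (by simpa [Set.mem_singleton_iff.mp h] using hs)

section QCong

variable {q a b c : ℂ}

lemma qCong.symm (hq : q ≠ 0) (h : qCong q a b) : qCong q b a := by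
  obtain ⟨m, rfl⟩ := h
  exact ⟨-m, by rw [← mul_assoc, ← zpow_add₀ hq, neg_add_cancel, zpow_zero, one_mul]⟩

lemma qCong.trans (hq : q ≠ 0) (hab : qCong q a b) (hbc : qCong q b c) : qCong q a c := by
  obtain ⟨m, rfl⟩ := hab
  obtain ⟨n, rfl⟩ := hbc
  exact ⟨m + n, by rw [← mul_assoc, ← zpow_add₀ hq]⟩

lemma qCong_zpow_mul_left (hq : q ≠ 0) (m : ℤ) : qCong q (q ^ m * a) b ↔ qCong q a b :=
  ⟨fun h => (qCong.symm hq ⟨m, rfl⟩).trans hq h, fun h => qCong.trans hq ⟨m, rfl⟩ h⟩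

end QCong

lemma exists_norm_zpow_mul_mem_Ioc {q z : ℂ} (hq : q ≠ 0) (hq1 : ‖q‖ < 1) (hz : z ≠ 0) {r : ℝ}
    (hr : 0 < r) : ∃ m : ℤ, ‖q‖ * r < ‖q ^ m * z‖ ∧ ‖q ^ m * z‖ ≤ r := by
  have hq0 : 0 < ‖q‖ := norm_pos_iff.mpr hq
  obtain ⟨n, hn1, hn2⟩ := exists_mem_Ioc_zpow (div_pos (norm_pos_iff.mpr hz) hr)
    (one_lt_inv₀ hq0 |>.mpr hq1)
  rw [_root_.inv_zpow', lt_div_iff₀ hr] at hn1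
  rw [_root_.inv_zpow', div_le_iff₀ hr] at hn2
  have hcancel : ∀ m : ℤ, ‖q‖ ^ m * ‖q‖ ^ (-m) = 1 := fun m => by
    rw [← zpow_add₀ hq0.ne', add_neg_cancel, zpow_zero]
  refine ⟨n + 1, ?_, ?_⟩
  · have := mul_lt_mul_of_pos_left hn1 (zpow_pos hq0 (n + 1))
    rw [← mul_assoc, zpow_add_one₀ hq0.ne', mul_assoc _ ‖q‖, mul_comm ‖q‖, ← mul_assoc,
      hcancel, one_mul] at this
    rwa [norm_mul, norm_zpow, zpow_add_one₀ hq0.ne']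
  · have := mul_le_mul_of_nonneg_left hn2 (zpow_pos hq0 (n + 1)).le
    rwa [← mul_assoc, hcancel, one_mul, ← norm_zpow, ← norm_mul] at this

structure IsThetaFunction (q c : ℂ) (k : ℕ) (f : ℂ → ℂ) : Prop where
  differentiableOn : DifferentiableOn ℂ f {0}ᶜ
  functional_eq : ∀ x, x ≠ 0 → x ^ k * f (q * x) = c * f x

namespace IsThetaFunction

variable {f : ℂ → ℂ} {q c : ℂ} {k : ℕ}

lemma apply_mul_eq_zero_iff (hf : IsThetaFunction q c k f) (hc : c ≠ 0) {x : ℂ} (hx : x ≠ 0) :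
    f (q * x) = 0 ↔ f x = 0 := by
  have h := hf.functional_eq x hx
  constructor <;> intro h0 <;> simp_all

lemma logDeriv_mul_comp (hf : IsThetaFunction q c k f) (hq : q ≠ 0) (hc : c ≠ 0) {x : ℂ}
    (hx : x ≠ 0) (hfx : f x ≠ 0) : q * logDeriv f (q * x) = logDeriv f x - k / x := by
  have hd : ∀ y, y ≠ 0 → DifferentiableAt ℂ f y := fun y hy =>
    hf.differentiableOn.differentiableAt (isOpen_compl_singleton.mem_nhds hy)
  have hdq : DifferentiableAt ℂ (fun y => f (q * y)) x :=
    (hd _ (mul_ne_zero hq hx)).comp x (differentiableAt_id.const_mul q)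
  have hfqx : f (q * x) ≠ 0 := fun h => hfx ((hf.apply_mul_eq_zero_iff hc hx).mp h)
  have h := logDeriv_congr_nhds (x := x) (f := fun y => y ^ k * f (q * y)) (g := fun y => c * f y)
    (eventually_of_mem (isOpen_compl_singleton.mem_nhds hx) hf.functional_eq) |>.eq_of_nhds
  rw [logDeriv_mul (f := (· ^ k)) (g := fun y => f (q * y)) x (pow_ne_zero k hx) hfqx
      (by fun_prop) hdq, logDeriv_const_mul x c hc, logDeriv_pow,
    show (fun y => f (q * y)) = f ∘ (q * ·) from rfl,
    logDeriv_comp (hd _ (mul_ne_zero hq hx)) (differentiableAt_id.const_mul q)] at h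
  rw [← h, deriv_const_mul_field', deriv_id'']
  ring

lemma circleIntegral_logDeriv_norm_mul (hf : IsThetaFunction q c k f) (hq : q ≠ 0) (hc : c ≠ 0)
    {r : ℝ} (hr : 0 < r) (hfr : ∀ z, ‖z‖ = r → f z ≠ 0) :
    (∮ z in C(0, ‖q‖ * r), logDeriv f z) = (∮ z in C(0, r), logDeriv f z) - 2 * π * I * k := by
  rw [← circleIntegral_mul_comp]
  have hinv : CircleIntegrable (fun z => (k : ℂ) * (z - 0)⁻¹) 0 r :=
    (circleIntegrable_sub_inv_iff.mpr (Or.inr (by simp [abs_of_pos hr, hr.ne]))).const_smul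
      (a := (k : ℂ))
  rw [circleIntegral.integral_congr hr.le (g := fun z => logDeriv f z - k * (z - 0)⁻¹),
    circleIntegral.integral_sub (hf.differentiableOn.circleIntegrable_logDeriv hr hfr) hinv,
    circleIntegral.integral_const_mul, circleIntegral.integral_sub_center_inv 0 hr.ne']
  · ring
  · intro z hz
    rw [mem_sphere_zero_iff_norm] at hz
    have hz0 : z ≠ 0 := by rintro rfl; simp [hr.ne] at hz
    simp only [hf.logDeriv_mul_comp hq hc hz0 (hfr z hz), sub_zero, div_eq_mul_inv]

lemma apply_eq_zero_of_qCong (hf : IsThetaFunction q c k f) (hq : q ≠ 0) (hc : c ≠ 0) {a b : ℂ}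
    (ha : a ≠ 0) (hfa : f a = 0) (hba : qCong q b a) : f b = 0 := by
  obtain ⟨m, rfl⟩ := hba
  induction m using Int.induction_on with
  | zero => simpa using hfa
  | succ n ih =>
    rw [zpow_add_one₀ hq, mul_comm _ q, mul_assoc]
    exact (hf.apply_mul_eq_zero_iff hc (mul_ne_zero (zpow_ne_zero _ hq) ha)).mpr ih
  | pred n ih =>
    refine (hf.apply_mul_eq_zero_iff hc (mul_ne_zero (zpow_ne_zero _ hq) ha)).mp ?_
    rwa [← mul_assoc, ← zpow_one_add₀ hq, add_sub_cancel]

lemma exists_radius (hf : IsThetaFunction q c k f) (hq : q ≠ 0) (hq1 : ‖q‖ < 1) (hc : c ≠ 0)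
    (hne : ∃ x, x ≠ 0 ∧ f x ≠ 0) :
    ∃ r > 0, (∀ z, ‖z‖ = r → f z ≠ 0) ∧ ∀ z, ‖z‖ = ‖q‖ * r → f z ≠ 0 := by
  have hq0 : 0 < ‖q‖ := norm_pos_iff.mpr hq
  have hfin := hf.differentiableOn.finite_zeros_of_isCompact hne
    ((isCompact_closedBall (0 : ℂ) 1).diff (isOpen_ball (x := 0) (ε := ‖q‖)))
    (closedBall_sdiff_ball_subset_compl_zero hq0)
  obtain ⟨r, ⟨hqr, hr1⟩, hr⟩ := ((Set.Ioc_infinite hq1).sdiff (hfin.image norm)).nonempty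
  have hfr : ∀ z, ‖z‖ = r → f z ≠ 0 := fun z hz hfz =>
    hr ⟨z, ⟨⟨by simp [hz, hr1], by simp [hz, hqr.le]⟩, hfz⟩, hz⟩
  refine ⟨r, hq0.trans hqr, hfr, fun z hz hfz => ?_⟩
  have hz0 : z ≠ 0 := norm_pos_iff.mp (hz ▸ mul_pos hq0 (hq0.trans hqr))
  refine hfr (q⁻¹ * z) ?_ ((hf.apply_mul_eq_zero_iff hc (mul_ne_zero (inv_ne_zero hq) hz0)).mp ?_)
  · rw [norm_mul, hz, norm_inv, inv_mul_cancel_left₀ hq0.ne']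
  · rwa [mul_inv_cancel_left₀ hq]

lemma sum_analyticOrderNatAt_eq (hf : IsThetaFunction q c k f) (hq : q ≠ 0) (hq1 : ‖q‖ < 1)
    (hc : c ≠ 0) {r : ℝ} (hr : 0 < r) (hfr : ∀ z, ‖z‖ = r → f z ≠ 0)
    (hfs : ∀ z, ‖z‖ = ‖q‖ * r → f z ≠ 0) {Z : Finset ℂ} (hZ : ∀ z ∈ Z, ‖q‖ * r < ‖z‖ ∧ ‖z‖ < r)
    (hfZ : ∀ z, ‖q‖ * r < ‖z‖ → ‖z‖ < r → f z = 0 → z ∈ Z) :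
    ∑ z ∈ Z, analyticOrderNatAt f z = k := by
  have h := hf.differentiableOn.circleIntegral_logDeriv_sub_eq
    (mul_pos (norm_pos_iff.mpr hq) hr) (mul_lt_of_lt_one_left hr hq1) hfs hfr hZ hfZ
  rw [hf.circleIntegral_logDeriv_norm_mul hq hc hr hfr, sub_sub_cancel] at h
  exact_mod_cast (mul_left_cancel₀ two_pi_I_ne_zero h).symm

theorem card_le (hf : IsThetaFunction q c k f) (hq : q ≠ 0) (hq1 : ‖q‖ < 1) (hc : c ≠ 0)
    (hne : ∃ x, x ≠ 0 ∧ f x ≠ 0) {ι : Type*} [Fintype ι] (z : ι → ℂ) (hz0 : ∀ i, z i ≠ 0)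
    (hfz : ∀ i, f (z i) = 0) (hz : Pairwise fun i j => ¬ qCong q (z i) (z j)) :
    Fintype.card ι ≤ k := by
  obtain ⟨r, hr, hfr, hfs⟩ := hf.exists_radius hq hq1 hc hne
  have hs : 0 < ‖q‖ * r := mul_pos (norm_pos_iff.mpr hq) hr
  have hfin := hf.differentiableOn.finite_zeros_of_isCompact hne
    ((isCompact_closedBall (0 : ℂ) r).diff (isOpen_ball (x := 0) (ε := ‖q‖ * r)))
    (closedBall_sdiff_ball_subset_compl_zero hs)
  have hmem : ∀ w, w ∈ hfin.toFinset ↔ (‖w‖ ≤ r ∧ ‖q‖ * r ≤ ‖w‖) ∧ f w = 0 := fun w => by simp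
  have hZ : ∀ w ∈ hfin.toFinset, ‖q‖ * r < ‖w‖ ∧ ‖w‖ < r := fun w hw => by
    obtain ⟨⟨hwr, hws⟩, hfw⟩ := (hmem w).mp hw
    exact ⟨hws.lt_of_ne fun h => hfs w h.symm hfw, hwr.lt_of_ne fun h => hfr w h hfw⟩
  have hfZ : ∀ w, ‖q‖ * r < ‖w‖ → ‖w‖ < r → f w = 0 → w ∈ hfin.toFinset :=
    fun w h1 h2 h3 => (hmem w).mpr ⟨⟨h2.le, h1.le⟩, h3⟩
  choose m hm using fun i => exists_norm_zpow_mul_mem_Ioc hq hq1 (hz0 i) hr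
  have hzero : ∀ i, f (q ^ m i * z i) = 0 := fun i =>
    hf.apply_eq_zero_of_qCong hq hc (hz0 i) (hfz i) ⟨m i, rfl⟩
  have hinj : Function.Injective fun i => q ^ m i * z i := fun i j hij => by
    by_contra hne
    exact hz hne ((qCong_zpow_mul_left hq (m i)).mp ⟨m j, hij⟩)
  calc Fintype.card ι
      ≤ hfin.toFinset.card := Finset.card_le_card_of_injOn _
        (fun i _ => hfZ _ (hm i).1 ((hm i).2.lt_of_ne fun h => hfr _ h (hzero i)) (hzero i))
        hinj.injOn
    _ = ∑ w ∈ hfin.toFinset, 1 := Finset.card_eq_sum_ones _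
    _ ≤ ∑ w ∈ hfin.toFinset, analyticOrderNatAt f w := Finset.sum_le_sum fun w hw =>
        hf.differentiableOn.one_le_analyticOrderNatAt hne
          (norm_pos_iff.mp (hs.trans (hZ w hw).1)) ((hmem w).mp hw).2
    _ = k := hf.sum_analyticOrderNatAt_eq hq hq1 hc hr hfr hfs hZ hfZ

theorem eq_zero_iff (hf : IsThetaFunction q c k f) (hq : q ≠ 0) (hq1 : ‖q‖ < 1) (hc : c ≠ 0)
    (hne : ∃ x, x ≠ 0 ∧ f x ≠ 0) {ι : Type*} [Fintype ι] (z : ι → ℂ)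
    (hcard : Fintype.card ι = k) (hz0 : ∀ i, z i ≠ 0) (hfz : ∀ i, f (z i) = 0)
    (hz : Pairwise fun i j => ¬ qCong q (z i) (z j)) {x : ℂ} (hx : x ≠ 0) :
    f x = 0 ↔ ∃ i, qCong q x (z i) := by
  refine ⟨fun hfx => ?_, fun ⟨i, hi⟩ => hf.apply_eq_zero_of_qCong hq hc (hz0 i) (hfz i) hi⟩
  by_contra! hxz
  have := hf.card_le hq hq1 hc hne (fun o : Option ι => o.elim x z)
    (by rintro (_ | i) <;> simp [hx, hz0]) (by rintro (_ | i) <;> simp [hfx, hfz]) ?_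
  · simp [hcard] at this
  rintro (_ | i) (_ | j) hij
  · exact absurd rfl hij
  · exact hxz j
  · exact fun h => hxz i (h.symm hq)
  · exact hz fun h => hij (congrArg some h)

theorem eq_zero_iff_qCong_or (hf : IsThetaFunction q c 2 f) (hq : q ≠ 0) (hq1 : ‖q‖ < 1)
    (hc : c ≠ 0) (hne : ∃ x, x ≠ 0 ∧ f x ≠ 0) {a b : ℂ} (ha : a ≠ 0) (hb : b ≠ 0) (hfa : f a = 0)
    (hfb : f b = 0) (hab : ¬ qCong q a b) {x : ℂ} (hx : x ≠ 0) :
    f x = 0 ↔ qCong q x a ∨ qCong q x b := by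
  have hpair : Pairwise fun i j : Fin 2 => ¬ qCong q (![a, b] i) (![a, b] j) := by
    intro i j hij
    fin_cases i <;> fin_cases j
    exacts [absurd rfl hij, hab, fun h => hab (h.symm hq), absurd rfl hij]
  simpa [Fin.exists_fin_two] using hf.eq_zero_iff hq hq1 hc hne ![a, b] (Fintype.card_fin 2)
    (by simp [Fin.forall_fin_two, ha, hb]) (by simp [Fin.forall_fin_two, hfa, hfb]) hpair hx

end IsThetaFunction

section MatrixFunctions

variable {A B : ℂ → Matrix (Fin 2) (Fin 2) ℂ} {x : ℂ}

lemma differentiableAt_mul_apply (hA : ∀ i j, DifferentiableAt ℂ (fun y => A y i j) x)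
    (hB : ∀ i j, DifferentiableAt ℂ (fun y => B y i j) x) (i j : Fin 2) :
    DifferentiableAt ℂ (fun y => (A y * B y) i j) x := by
  simp only [Matrix.mul_apply, Fin.sum_univ_two]
  exact ((hA i 0).mul (hB 0 j)).add ((hA i 1).mul (hB 1 j))

lemma differentiableAt_det (hA : ∀ i j, DifferentiableAt ℂ (fun y => A y i j) x) :
    DifferentiableAt ℂ (fun y => (A y).det) x := by
  simp only [Matrix.det_fin_two]
  exact ((hA 0 0).mul (hA 1 1)).sub ((hA 0 1).mul (hA 1 0))

lemma differentiableAt_inv_apply (hA : ∀ i j, DifferentiableAt ℂ (fun y => A y i j) x)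
    (hdet : (A x).det ≠ 0) (i j : Fin 2) :
    DifferentiableAt ℂ (fun y => (A y)⁻¹ i j) x := by
  simp only [Matrix.inv_def, Ring.inverse_eq_inv', Matrix.smul_apply, smul_eq_mul,
    Matrix.adjugate_fin_two]
  refine ((differentiableAt_det hA).inv hdet).mul ?_
  fin_cases i <;> fin_cases j
  · exact hA 1 1
  · exact (hA 0 1).neg
  · exact (hA 1 0).neg
  · exact hA 0 0

namespace MatHolo

lemma const (C : Matrix (Fin 2) (Fin 2) ℂ) : MatHolo fun _ => C :=
  fun _ _ _ _ => differentiableAt_const _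

lemma mul (hA : MatHolo A) (hB : MatHolo B) : MatHolo fun x => A x * B x :=
  fun i j x hx => differentiableAt_mul_apply (fun i j => hA i j x hx) (fun i j => hB i j x hx) i j

lemma sub (hA : MatHolo A) (hB : MatHolo B) : MatHolo fun x => A x - B x :=
  fun i j x hx => (hA i j x hx).sub (hB i j x hx)

lemma inv (hA : MatHolo A) (hdet : ∀ x, x ≠ 0 → (A x).det ≠ 0) : MatHolo fun x => (A x)⁻¹ :=
  fun i j x hx => differentiableAt_inv_apply (fun i j => hA i j x hx) (hdet x hx) i j

lemma comp_mul (hA : MatHolo A) {q : ℂ} (hq : q ≠ 0) : MatHolo fun x => A (q * x) :=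
  fun i j x hx => (hA i j (q * x) (mul_ne_zero hq hx)).comp x (differentiableAt_id.const_mul q)

lemma differentiableOn_det (hA : MatHolo A) : DifferentiableOn ℂ (fun x => (A x).det) {0}ᶜ :=
  fun x hx => (differentiableAt_det fun i j => hA i j x hx).differentiableWithinAt

lemma eventually_det_ne_zero (hA : MatHolo A) (hx : x ≠ 0) (h : (A x).det ≠ 0) :
    ∀ᶠ y in 𝓝 x, (A y).det ≠ 0 :=
  (differentiableAt_det fun i j => hA i j x hx).continuousAt.eventually_ne h

lemma eq_zero_of_mul_eq_zero (hA : MatHolo A) (hne : ∃ x, x ≠ 0 ∧ (A x).det ≠ 0)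
    (hB : MatHolo B) (hAB : ∀ x, x ≠ 0 → A x * B x = 0) (hx : x ≠ 0) : B x = 0 := by
  ext i j
  refine hA.differentiableOn_det.eq_zero_of_mul_eq_zero hne
    (fun y hy => (hB i j y hy).continuousAt) (fun y hy => ?_) hx
  have h := congrArg (fun N => ((A y).adjugate * N) i j) (hAB y hy)
  simpa [← Matrix.mul_assoc, Matrix.adjugate_mul] using h

end MatHolo

end MatrixFunctions

lemma Matrix.nonsing_inv_mul_eq_mul_nonsing_inv {n α : Type*} [Fintype n] [DecidableEq n]
    [CommRing α] {P Q P' Q' : Matrix n n α} (h : P * Q = P' * Q') (hP' : IsUnit P'.det)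
    (hQ : IsUnit Q.det) :
    P'⁻¹ * P = Q' * Q⁻¹ := by
  rw [← Matrix.mul_nonsing_inv_cancel_right Q (P'⁻¹ * P) hQ, Matrix.mul_assoc P'⁻¹, h,
    Matrix.nonsing_inv_mul_cancel_left _ _ hP']

section Gluing

variable {P Q P' Q' : ℂ → Matrix (Fin 2) (Fin 2) ℂ}

theorem exists_gauge_of_mul_eq_mul (hP : MatHolo P) (hQ : MatHolo Q) (hP' : MatHolo P')
    (hQ' : MatHolo Q') (hPQ : ∀ x, x ≠ 0 → P x * Q x = P' x * Q' x)
    (hcover : ∀ x, x ≠ 0 →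
      ((P x).det ≠ 0 ∧ (P' x).det ≠ 0) ∨ ((Q x).det ≠ 0 ∧ (Q' x).det ≠ 0)) :
    ∃ Λ, GLO Λ ∧ (∀ x, x ≠ 0 → P' x = P x * (Λ x)⁻¹) ∧ (∀ x, x ≠ 0 → Q' x = Λ x * Q x) := by
  classical
  set Λ := fun x => if (P x).det ≠ 0 ∧ (P' x).det ≠ 0 then (P' x)⁻¹ * P x else Q' x * (Q x)⁻¹
  have hΛP : ∀ x, (P x).det ≠ 0 → (P' x).det ≠ 0 → Λ x = (P' x)⁻¹ * P x :=
    fun x h h' => if_pos ⟨h, h'⟩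
  have hΛQ : ∀ x, x ≠ 0 → (Q x).det ≠ 0 → Λ x = Q' x * (Q x)⁻¹ := fun x hx h => by
    by_cases h' : (P x).det ≠ 0 ∧ (P' x).det ≠ 0
    · rw [hΛP x h'.1 h'.2, Matrix.nonsing_inv_mul_eq_mul_nonsing_inv (hPQ x hx)
        (isUnit_iff_ne_zero.mpr h'.2) (isUnit_iff_ne_zero.mpr h)]
    · exact if_neg h'
  refine ⟨Λ, ⟨fun i j x hx => ?_, fun x hx => ?_⟩, fun x hx => ?_, fun x hx => ?_⟩ <;>
    rcases hcover x hx with ⟨h1, h2⟩ | ⟨h1, h2⟩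
  · refine (differentiableAt_mul_apply (differentiableAt_inv_apply (fun i j => hP' i j x hx) h2)
      (fun i j => hP i j x hx) i j).congr_of_eventuallyEq ?_
    filter_upwards [hP.eventually_det_ne_zero hx h1, hP'.eventually_det_ne_zero hx h2]
      with y hy hy' using by rw [hΛP y hy hy']
  · refine (differentiableAt_mul_apply (fun i j => hQ' i j x hx)
      (differentiableAt_inv_apply (fun i j => hQ i j x hx) h1) i j).congr_of_eventuallyEq ?_
    filter_upwards [hQ.eventually_det_ne_zero hx h1, isOpen_compl_singleton.mem_nhds hx]
      with y hy hy0 using by rw [hΛQ y hy0 hy]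
  · rw [hΛP x h1 h2, Matrix.det_mul, Matrix.det_nonsing_inv, Ring.inverse_eq_inv']
    exact isUnit_iff_ne_zero.mpr (mul_ne_zero (inv_ne_zero h2) h1)
  · rw [hΛQ x hx h1, Matrix.det_mul, Matrix.det_nonsing_inv, Ring.inverse_eq_inv']
    exact isUnit_iff_ne_zero.mpr (mul_ne_zero h2 (inv_ne_zero h1))
  · rw [hΛP x h1 h2, Matrix.mul_inv_rev, Matrix.nonsing_inv_nonsing_inv _
      (isUnit_iff_ne_zero.mpr h2)]
    exact (Matrix.mul_nonsing_inv_cancel_left _ _ (isUnit_iff_ne_zero.mpr h1)).symm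
  · rw [hΛQ x hx h1, Matrix.mul_inv_rev, Matrix.nonsing_inv_nonsing_inv _
      (isUnit_iff_ne_zero.mpr h1), ← Matrix.mul_assoc, hPQ x hx]
    exact (Matrix.mul_nonsing_inv_cancel_right _ _ (isUnit_iff_ne_zero.mpr h2)).symm
  · rw [hΛP x h1 h2, Matrix.mul_assoc, hPQ x hx]
    exact (Matrix.nonsing_inv_mul_cancel_left _ _ (isUnit_iff_ne_zero.mpr h2)).symm
  · rw [hΛQ x hx h1]
    exact (Matrix.nonsing_inv_mul_cancel_right _ _ (isUnit_iff_ne_zero.mpr h1)).symm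

end Gluing

namespace Mano

variable {q : ℂ} {ρ σv : Fin 2 → ℂ} {xs : Fin 4 → ℂ} {x1 x2 : ℂ}
  {M P Q P' Q' Λ : ℂ → Matrix (Fin 2) (Fin 2) ℂ} {C C' : Matrix (Fin 2) (Fin 2) ℂ}

lemma isThetaFunction_det (h : Mano q ρ x1 x2 M C P Q) :
    IsThetaFunction q (ρ 0 * ρ 1 / C.det) 2 fun x => (P x).det := by
  obtain ⟨hC, hP, -, -, hPfe, -⟩ := h
  refine ⟨hP.differentiableOn_det, fun x hx => ?_⟩
  have := congrArg Matrix.det (hPfe x hx)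
  simp only [Matrix.det_smul, Matrix.det_mul, Matrix.det_diagonal, Fin.prod_univ_two,
    Fintype.card_fin] at this
  rw [div_mul_eq_mul_div, eq_div_iff hC.ne_zero]
  linear_combination this

lemma isThetaFunction_det_of_mem_FJS (hM : M ∈ FJS q ρ σv xs) (hσ : ∀ i, σv i ≠ 0) :
    IsThetaFunction q (ρ 0 * ρ 1 / (σv 0 * σv 1)) 4 fun x => (M x).det := by
  obtain ⟨hMh, hMfe, -⟩ := hM
  refine ⟨hMh.differentiableOn_det, fun x hx => ?_⟩
  have := congrArg Matrix.det (hMfe x hx)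
  simp only [Matrix.det_smul, Matrix.det_mul, Matrix.det_diagonal, Fin.prod_univ_two,
    Fintype.card_fin] at this
  rw [div_mul_eq_mul_div, eq_div_iff (mul_ne_zero (hσ 0) (hσ 1))]
  linear_combination this

lemma isThetaFunction_det_right (hM : M ∈ FJS q ρ σv xs) (h : Mano q ρ x1 x2 M C P Q)
    (hq : q ≠ 0) (hρ : ∀ i, ρ i ≠ 0) (hσ : ∀ i, σv i ≠ 0) :
    IsThetaFunction q (C.det / (σv 0 * σv 1)) 2 fun x => (Q x).det := by
  have hPθ := h.isThetaFunction_det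
  have hMθ := isThetaFunction_det_of_mem_FJS hM hσ
  obtain ⟨hC, hP, hQ, hPQ, -, hPne, -⟩ := h
  have hdetM : ∀ x, x ≠ 0 → (M x).det = (P x).det * (Q x).det := fun x hx => by
    rw [hPQ x hx, Matrix.det_mul]
  refine ⟨hQ.differentiableOn_det, fun x hx => sub_eq_zero.mp ?_⟩
  refine hP.differentiableOn_det.eq_zero_of_mul_eq_zero hPne
    (h := fun y => y ^ 2 * (Q (q * y)).det - C.det / (σv 0 * σv 1) * (Q y).det)
    (fun y hy => ((differentiableAt_pow 2).mul
      (differentiableAt_det fun i j => (hQ.comp_mul hq) i j y hy)).sub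
      ((differentiableAt_det fun i j => hQ i j y hy).const_mul _) |>.continuousAt)
    (fun y hy => ?_) hx
  have hP' := hPθ.functional_eq y hy
  have hM' := hMθ.functional_eq y hy
  rw [hdetM y hy, hdetM (q * y) (mul_ne_zero hq hy)] at hM'
  have hcP : ρ 0 * ρ 1 / C.det ≠ 0 := div_ne_zero (mul_ne_zero (hρ 0) (hρ 1)) hC.ne_zero
  refine (mul_eq_zero.mp ?_).resolve_left hcP
  have hc : ρ 0 * ρ 1 / (σv 0 * σv 1) = ρ 0 * ρ 1 / C.det * (C.det / (σv 0 * σv 1)) := by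
    field_simp [hC.ne_zero]
  linear_combination hM' - y ^ 2 * (Q (q * y)).det * hP' + (P y).det * (Q y).det * hc

lemma det_eq_zero_iff (h : Mano q ρ x1 x2 M C P Q) (hq : q ≠ 0) (hq1 : ‖q‖ < 1)
    (hρ : ∀ i, ρ i ≠ 0) (hx1 : x1 ≠ 0) (hx2 : x2 ≠ 0) (h12 : ¬ qCong q x1 x2) {x : ℂ}
    (hx : x ≠ 0) : (P x).det = 0 ↔ qCong q x x1 ∨ qCong q x x2 := by
  have hθ := h.isThetaFunction_det
  obtain ⟨hC, -, -, -, -, hne, hP1, hP2⟩ := h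
  exact hθ.eq_zero_iff_qCong_or hq hq1 (div_ne_zero (mul_ne_zero (hρ 0) (hρ 1)) hC.ne_zero) hne
    hx1 hx2 hP1 hP2 h12 hx

lemma det_right_eq_zero_iff (hM : M ∈ FJS q ρ σv xs) (h : Mano q ρ (xs 0) (xs 1) M C P Q)
    (hq : q ≠ 0) (hq1 : ‖q‖ < 1) (hρ : ∀ i, ρ i ≠ 0) (hσ : ∀ i, σv i ≠ 0) (hx0 : ∀ k, xs k ≠ 0)
    (hNRx : ∀ k l : Fin 4, k ≠ l → ¬ qCong q (xs k) (xs l)) {x : ℂ} (hx : x ≠ 0) :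
    (Q x).det = 0 ↔ qCong q x (xs 2) ∨ qCong q x (xs 3) := by
  have hPQ : ∀ x, x ≠ 0 → (M x).det = (P x).det * (Q x).det := fun x hx => by
    rw [h.2.2.2.1 x hx, Matrix.det_mul]
  have hQzero : ∀ k, k ≠ 0 → k ≠ 1 → (Q (xs k)).det = 0 := fun k hk0 hk1 => by
    have hPk : (P (xs k)).det ≠ 0 := by
      rw [Ne, h.det_eq_zero_iff hq hq1 hρ (hx0 0) (hx0 1) (hNRx 0 1 (by decide)) (hx0 k)]
      rintro (h0 | h1)
      exacts [hNRx k 0 hk0 h0, hNRx k 1 hk1 h1]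
    have := hPQ _ (hx0 k)
    rw [hM.2.2.2 k] at this
    exact (mul_eq_zero.mp this.symm).resolve_left hPk
  obtain ⟨x₀, hx₀, hMx₀⟩ := hM.2.2.1
  refine (h.isThetaFunction_det_right hM hq hρ hσ).eq_zero_iff_qCong_or hq hq1
    (div_ne_zero h.1.ne_zero (mul_ne_zero (hσ 0) (hσ 1)))
    ⟨x₀, hx₀, right_ne_zero_of_mul (hPQ x₀ hx₀ ▸ hMx₀)⟩ (hx0 2) (hx0 3)
    (hQzero 2 (by decide) (by decide)) (hQzero 3 (by decide) (by decide))
    (hNRx 2 3 (by decide)) hx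

lemma det_right_ne_zero (hM : M ∈ FJS q ρ σv xs) (h : Mano q ρ (xs 0) (xs 1) M C P Q)
    (hq : q ≠ 0) (hq1 : ‖q‖ < 1) (hρ : ∀ i, ρ i ≠ 0) (hσ : ∀ i, σv i ≠ 0) (hx0 : ∀ k, xs k ≠ 0)
    (hNRx : ∀ k l : Fin 4, k ≠ l → ¬ qCong q (xs k) (xs l)) {x : ℂ} (hx : x ≠ 0)
    (hPx : (P x).det = 0) : (Q x).det ≠ 0 := by
  rw [h.det_eq_zero_iff hq hq1 hρ (hx0 0) (hx0 1) (hNRx 0 1 (by decide)) hx] at hPx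
  rw [Ne, det_right_eq_zero_iff hM h hq hq1 hρ hσ hx0 hNRx hx]
  have hdisj : ∀ k l : Fin 4, k ≠ l → qCong q x (xs k) → ¬ qCong q x (xs l) :=
    fun k l hkl hk hl => hNRx k l hkl ((hk.symm hq).trans hq hl)
  rcases hPx with h0 | h1 <;> rintro (h2 | h3)
  exacts [hdisj 0 2 (by decide) h0 h2, hdisj 0 3 (by decide) h0 h3,
    hdisj 1 2 (by decide) h1 h2, hdisj 1 3 (by decide) h1 h3]

theorem gauge (h : Mano q ρ x1 x2 M C P Q) (hq : q ≠ 0) (hC' : IsUnit C'.det) (hΛ : GLO Λ)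
    (hΛC : ∀ x, x ≠ 0 → Λ (q * x) * C = C' * Λ x) :
    Mano q ρ x1 x2 M C' (fun x => P x * (Λ x)⁻¹) (fun x => Λ x * Q x) := by
  obtain ⟨-, hP, hQ, hPQ, hPfe, ⟨x₀, hx₀, hPx₀⟩, hP1, hP2⟩ := h
  obtain ⟨hΛh, hΛu⟩ := hΛ
  have hC : ∀ x, x ≠ 0 → (Λ (q * x))⁻¹ * C' = C * (Λ x)⁻¹ := fun x hx => by
    rw [← Matrix.mul_nonsing_inv_cancel_right (Λ x) ((Λ (q * x))⁻¹ * C') (hΛu x hx),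
      Matrix.mul_assoc _ C', ← hΛC x hx,
      Matrix.nonsing_inv_mul_cancel_left _ _ (hΛu _ (mul_ne_zero hq hx))]
  refine ⟨hC', hP.mul (hΛh.inv fun x hx => (hΛu x hx).ne_zero), hΛh.mul hQ, fun x hx => ?_,
    fun x hx => ?_, ⟨x₀, hx₀, ?_⟩, ?_, ?_⟩
  · rw [Matrix.mul_assoc, Matrix.nonsing_inv_mul_cancel_left _ _ (hΛu x hx), hPQ x hx]
  · rw [Matrix.mul_assoc, hC x hx, ← Matrix.mul_assoc, ← smul_mul_assoc, hPfe x hx,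
      Matrix.mul_assoc]
  · simpa [Matrix.det_mul, Matrix.det_nonsing_inv, hPx₀] using (hΛu x₀ hx₀).ne_zero
  · simp [Matrix.det_mul, hP1]
  · simp [Matrix.det_mul, hP2]

lemma gauge_functional_eq (h : Mano q ρ x1 x2 M C P Q) (h' : Mano q ρ x1 x2 M C' P' Q')
    (hq : q ≠ 0) (hΛ : MatHolo Λ) (hPΛ : ∀ x, x ≠ 0 → P' x * Λ x = P x) {x : ℂ} (hx : x ≠ 0) :
    Λ (q * x) * C = C' * Λ x := by
  obtain ⟨-, -, -, -, hPfe, -⟩ := h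
  obtain ⟨-, hP', -, -, hP'fe, ⟨x₀, hx₀, hP'x₀⟩, -⟩ := h'
  refine sub_eq_zero.mp (MatHolo.eq_zero_of_mul_eq_zero (hP'.comp_mul hq)
    ⟨q⁻¹ * x₀, mul_ne_zero (inv_ne_zero hq) hx₀, by rwa [mul_inv_cancel_left₀ hq]⟩
    (((hΛ.comp_mul hq).mul (MatHolo.const C)).sub ((MatHolo.const C').mul hΛ))
    (fun y hy => ?_) hx)
  have : y • (P' (q * y) * (Λ (q * y) * C - C' * Λ y)) = 0 := by
    rw [Matrix.mul_sub, smul_sub, ← Matrix.mul_assoc, hPΛ _ (mul_ne_zero hq hy), hPfe y hy,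
      ← Matrix.mul_assoc, ← smul_mul_assoc, hP'fe y hy, Matrix.mul_assoc, hPΛ y hy, sub_self]
  exact (smul_eq_zero.mp this).resolve_left hy

theorem exists_gauge (hM : M ∈ FJS q ρ σv xs) (hq : q ≠ 0) (hq1 : ‖q‖ < 1)
    (hρ : ∀ i, ρ i ≠ 0) (hσ : ∀ i, σv i ≠ 0) (hx0 : ∀ k, xs k ≠ 0)
    (hNRx : ∀ k l : Fin 4, k ≠ l → ¬ qCong q (xs k) (xs l))
    (h : Mano q ρ (xs 0) (xs 1) M C P Q) (h' : Mano q ρ (xs 0) (xs 1) M C' P' Q') :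
    ∃ Λ, GLO Λ ∧ (∀ x, x ≠ 0 → P' x = P x * (Λ x)⁻¹) ∧ (∀ x, x ≠ 0 → Q' x = Λ x * Q x) ∧
      ∀ x, x ≠ 0 → Λ (q * x) * C = C' * Λ x := by
  have hPP' : ∀ x, x ≠ 0 → ((P' x).det = 0 ↔ (P x).det = 0) := fun x hx => by
    rw [h.det_eq_zero_iff hq hq1 hρ (hx0 0) (hx0 1) (hNRx 0 1 (by decide)) hx,
      h'.det_eq_zero_iff hq hq1 hρ (hx0 0) (hx0 1) (hNRx 0 1 (by decide)) hx]
  have hcover : ∀ x, x ≠ 0 →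
      ((P x).det ≠ 0 ∧ (P' x).det ≠ 0) ∨ ((Q x).det ≠ 0 ∧ (Q' x).det ≠ 0) := fun x hx => by
    by_cases hPx : (P x).det = 0
    · exact Or.inr ⟨h.det_right_ne_zero hM hq hq1 hρ hσ hx0 hNRx hx hPx,
        h'.det_right_ne_zero hM hq hq1 hρ hσ hx0 hNRx hx ((hPP' x hx).mpr hPx)⟩
    · exact Or.inl ⟨hPx, fun hP'x => hPx ((hPP' x hx).mp hP'x)⟩
  obtain ⟨Λ, hΛ, hP'Λ, hQ'Λ⟩ := exists_gauge_of_mul_eq_mul h.2.1 h.2.2.1 h'.2.1 h'.2.2.1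
    (fun x hx => (h.2.2.2.1 x hx).symm.trans (h'.2.2.2.1 x hx)) hcover
  refine ⟨Λ, hΛ, hP'Λ, hQ'Λ, fun x hx => h.gauge_functional_eq h' hq hΛ.1 (fun y hy => ?_) hx⟩
  rw [hP'Λ y hy, Matrix.nonsing_inv_mul_cancel_right _ _ (hΛ.2 y hy)]

end Mano

theorem stmt12_general (q : ℂ) (hq0 : 0 < ‖q‖) (hq1 : ‖q‖ < 1)
    (ρ σv : Fin 2 → ℂ) (xs : Fin 4 → ℂ)
    (hρ0 : ∀ i, ρ i ≠ 0) (hσ0 : ∀ i, σv i ≠ 0) (hx0 : ∀ k, xs k ≠ 0)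
    (hNRx : ∀ k l : Fin 4, k ≠ l → ¬ qCong q (xs k) (xs l))
    (M : ℂ → Matrix (Fin 2) (Fin 2) ℂ) (hM : M ∈ FJS q ρ σv xs) :
    (∀ (C C' : Matrix (Fin 2) (Fin 2) ℂ) (P Q Λ : ℂ → Matrix (Fin 2) (Fin 2) ℂ),
      IsUnit C'.det → Mano q ρ (xs 0) (xs 1) M C P Q → GLO Λ →
      (∀ x : ℂ, x ≠ 0 → Λ (q * x) * C = C' * Λ x) →
      Mano q ρ (xs 0) (xs 1) M C' (fun x => P x * (Λ x)⁻¹) (fun x => Λ x * Q x)) ∧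
    (∀ (C C' : Matrix (Fin 2) (Fin 2) ℂ) (P Q P' Q' : ℂ → Matrix (Fin 2) (Fin 2) ℂ),
      Mano q ρ (xs 0) (xs 1) M C P Q → Mano q ρ (xs 0) (xs 1) M C' P' Q' →
      ∃ Λ : ℂ → Matrix (Fin 2) (Fin 2) ℂ, GLO Λ ∧
        (∀ x : ℂ, x ≠ 0 → P' x = P x * (Λ x)⁻¹) ∧
        (∀ x : ℂ, x ≠ 0 → Q' x = Λ x * Q x) ∧
        (∀ x : ℂ, x ≠ 0 → Λ (q * x) * C = C' * Λ x)) := by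
  have hq : q ≠ 0 := norm_pos_iff.mp hq0
  exact ⟨fun _ _ _ _ _ hC' h hΛ hΛC => h.gauge hq hC' hΛ hΛC,
    fun _ _ _ _ _ _ h h' => Mano.exists_gauge hM hq hq1 hρ0 hσ0 hx0 hNRx h h'⟩

/-- Gauge freedom of Mano decompositions. -/
theorem stmt12 (q : ℂ) (hq0 : 0 < ‖q‖) (hq1 : ‖q‖ < 1)
    (ρ σv : Fin 2 → ℂ) (xs : Fin 4 → ℂ)
    (hρ0 : ∀ i, ρ i ≠ 0) (hσ0 : ∀ i, σv i ≠ 0) (hx0 : ∀ k, xs k ≠ 0)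
    (hFR : qCong q (xs 0 * xs 1 * xs 2 * xs 3) (ρ 0 * ρ 1 / (σv 0 * σv 1)))
    (hNRρ : ¬ qCong q (ρ 0) (ρ 1)) (hNRσ : ¬ qCong q (σv 0) (σv 1))
    (hNRx : ∀ k l : Fin 4, k ≠ l → ¬ qCong q (xs k) (xs l))
    (hNS : ∀ i j : Fin 2, ¬ qCong q (ρ i / σv j) (xs 0 * xs 1))
    (M : ℂ → Matrix (Fin 2) (Fin 2) ℂ) (hM : M ∈ FJS q ρ σv xs) :
    (∀ (C C' : Matrix (Fin 2) (Fin 2) ℂ) (P Q Λ : ℂ → Matrix (Fin 2) (Fin 2) ℂ),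
      IsUnit C'.det → Mano q ρ (xs 0) (xs 1) M C P Q → GLO Λ →
      (∀ x : ℂ, x ≠ 0 → Λ (q * x) * C = C' * Λ x) →
      Mano q ρ (xs 0) (xs 1) M C' (fun x => P x * (Λ x)⁻¹) (fun x => Λ x * Q x)) ∧
    (∀ (C C' : Matrix (Fin 2) (Fin 2) ℂ) (P Q P' Q' : ℂ → Matrix (Fin 2) (Fin 2) ℂ),
      Mano q ρ (xs 0) (xs 1) M C P Q → Mano q ρ (xs 0) (xs 1) M C' P' Q' →
      ∃ Λ : ℂ → Matrix (Fin 2) (Fin 2) ℂ, GLO Λ ∧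
        (∀ x : ℂ, x ≠ 0 → P' x = P x * (Λ x)⁻¹) ∧
        (∀ x : ℂ, x ≠ 0 → Q' x = Λ x * Q x) ∧
        (∀ x : ℂ, x ≠ 0 → Λ (q * x) * C = C' * Λ x)) :=
  stmt12_general q hq0 hq1 ρ σv xs hρ0 hσ0 hx0 hNRx M hM
end
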